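/- arXiv:1708.07367 — 4 statements merged into one kernel-verified Lean document; each statement's English description precedes it below -/
import Mathlib

section
/- For any π̄ ∈ (0,1/4) and any estimator γ̂⋆ that maps a sample path of length n ≤ 1/(4π̄) to a real number, and for any choice of initial state distribution, there exists a two-state ergodic reversible Markov chain with absolute spectral gap γ⋆ ≥ 1/2 and minimum stationary probability π⋆ ≥ π̄ such that, when the sample path (X_1,...,X_n) is drawn from this chain started from the given initial distribution, Pr[|γ̂⋆(X_1,...,X_n) − γ⋆| ≥ 1/8] ≥ 3/8. -/
open Finset Matrix Real MeasureTheory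
open scoped Classical BigOperators

namespace MCEst

/-- A row-stochastic matrix. -/
def IsStochastic {d : ℕ} (P : Matrix (Fin d) (Fin d) ℝ) : Prop :=
  (∀ i j, 0 ≤ P i j) ∧ ∀ i, ∑ j, P i j = 1

/-- A probability vector. -/
def IsProbVec {d : ℕ} (q : Fin d → ℝ) : Prop :=
  (∀ i, 0 ≤ q i) ∧ ∑ i, q i = 1

/-- Ergodicity (irreducibility + aperiodicity) of a finite stochastic matrix,
expressed as primitivity. -/
def IsErgodic {d : ℕ} (P : Matrix (Fin d) (Fin d) ℝ) : Prop :=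
  ∃ k : ℕ, ∀ i j, 0 < (P ^ k) i j

/-- `π` is a stationary distribution of `P`. -/
def IsStationary {d : ℕ} (P : Matrix (Fin d) (Fin d) ℝ) (w : Fin d → ℝ) : Prop :=
  IsProbVec w ∧ ∀ j, ∑ i, w i * P i j = w j

/-- Reversibility (detailed balance) of `P` w.r.t. `π`. -/
def IsReversible {d : ℕ} (P : Matrix (Fin d) (Fin d) ℝ) (w : Fin d → ℝ) : Prop :=
  ∀ i j, w i * P i j = w j * P j i

/-- The absolute spectral gap: one minus the largest absolute value of an
eigenvalue (root of the characteristic polynomial) different from 1. -/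
noncomputable def absSpectralGap {d : ℕ} (P : Matrix (Fin d) (Fin d) ℝ) : ℝ :=
  1 - sSup {x : ℝ | ∃ μ : ℝ, μ ≠ 1 ∧ P.charpoly.IsRoot μ ∧ x = |μ|}

/-- Minimum entry of a vector. -/
noncomputable def minEntry {d : ℕ} (v : Fin d → ℝ) : ℝ := ⨅ i, v i

/-- Probability of observing the sample path `x` (0-indexed, i.e. `x 0 = X_1`)
when the chain has initial distribution `q` and transition matrix `P`. -/
noncomputable def pathProb {d n : ℕ} (q : Fin d → ℝ) (P : Matrix (Fin d) (Fin d) ℝ)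
    (x : Fin n → Fin d) : ℝ :=
  ∏ t : Fin n,
    if (t : ℕ) = 0 then q (x t)
    else P (x ⟨(t : ℕ) - 1, by have := t.isLt; omega⟩) (x t)

/-- Probability of an event for the length-`n` sample path of the chain. -/
noncomputable def prob {d n : ℕ} (q : Fin d → ℝ) (P : Matrix (Fin d) (Fin d) ℝ)
    (E : Set (Fin n → Fin d)) : ℝ :=
  ∑ x : Fin n → Fin d, if x ∈ E then pathProb q P x else 0

/-- The successor of an index within `Fin n` (cyclically). -/
def succAt {n : ℕ} (t : Fin n) : Fin n :=
  ⟨((t : ℕ) + 1) % n, Nat.mod_lt _ (by have := t.isLt; omega)⟩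

/-- Empirical state frequencies. -/
noncomputable def pihat {d n : ℕ} (x : Fin n → Fin d) (i : Fin d) : ℝ :=
  ((univ.filter fun t => x t = i).card : ℝ) / n

/-- Empirical doublet frequencies. -/
noncomputable def Mhat {d n : ℕ} (x : Fin n → Fin d) : Matrix (Fin d) (Fin d) ℝ :=
  Matrix.of fun i j =>
    ((univ.filter fun t : Fin n => (t : ℕ) + 1 < n ∧ x t = i ∧ x (succAt t) = j).card : ℝ)
      / ((n : ℝ) - 1)

/-- Number of visits to `i` among the first `n-1` states. -/
def Ncount {d n : ℕ} (x : Fin n → Fin d) (i : Fin d) : ℕ :=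
  (univ.filter fun t : Fin n => (t : ℕ) + 1 < n ∧ x t = i).card

/-- Number of observed transitions from `i` to `j`. -/
def Npair {d n : ℕ} (x : Fin n → Fin d) (i j : Fin d) : ℕ :=
  (univ.filter fun t : Fin n => (t : ℕ) + 1 < n ∧ x t = i ∧ x (succAt t) = j).card

/-- Plug-in estimate of the matrix L. -/
noncomputable def Lhat {d n : ℕ} (x : Fin n → Fin d) : Matrix (Fin d) (Fin d) ℝ :=
  Matrix.of fun i j => Mhat x i j / (Real.sqrt (pihat x i) * Real.sqrt (pihat x j))

/-- Symmetrization of a square matrix. -/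
noncomputable def symPart {d : ℕ} (A : Matrix (Fin d) (Fin d) ℝ) : Matrix (Fin d) (Fin d) ℝ :=
  (1 / 2 : ℝ) • (A + Aᵀ)

lemma symPart_isHermitian {d : ℕ} (A : Matrix (Fin d) (Fin d) ℝ) :
    (symPart A).IsHermitian := by
  unfold symPart Matrix.IsHermitian
  ext i j
  simp [Matrix.conjTranspose_apply, Matrix.transpose_apply, Matrix.add_apply,
    Matrix.smul_apply]
  ring

/-- Eigenvalues of a hermitian matrix sorted in ascending order. -/
noncomputable def lamAsc {d : ℕ} {A : Matrix (Fin d) (Fin d) ℝ} (hA : A.IsHermitian) :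
    Fin d → ℝ :=
  hA.eigenvalues ∘ Tuple.sort hA.eigenvalues

/-- The plug-in spectral gap estimator γ̂⋆ = 1 - min{1, max{λ̂₂, |λ̂_d|}}
(equal to 0 when some empirical frequency vanishes). -/
noncomputable def gapEstimator {d n : ℕ} (x : Fin n → Fin d) : ℝ :=
  if h : 1 < d ∧ ∀ i, 0 < pihat x i then
    1 - min 1 (max (lamAsc (symPart_isHermitian (Lhat x)) ⟨d - 2, by have := h.1; omega⟩)
        |lamAsc (symPart_isHermitian (Lhat x)) ⟨0, by have := h.1; omega⟩|)
  else 0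

/-- Spectral norm (ℓ²-operator norm) of a real square matrix. -/
noncomputable def specNorm {d : ℕ} (A : Matrix (Fin d) (Fin d) ℝ) : ℝ :=
  ‖Matrix.toEuclideanCLM (𝕜 := ℝ) A‖

/-- The matrix L = Diag(π)^{1/2} P Diag(π)^{-1/2}. -/
noncomputable def Lgen {d : ℕ} (w : Fin d → ℝ) (P : Matrix (Fin d) (Fin d) ℝ) :
    Matrix (Fin d) (Fin d) ℝ :=
  Matrix.of fun i j => Real.sqrt (w i) * P i j / Real.sqrt (w j)

/-- Laplace-smoothed transition probability estimates. -/
noncomputable def Phat {d n : ℕ} (α : ℝ) (x : Fin n → Fin d) : Matrix (Fin d) (Fin d) ℝ :=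
  Matrix.of fun i j => ((Npair x i j : ℝ) + α) / ((Ncount x i : ℝ) + d * α)

/-- The threshold t̂ from the algorithm. -/
noncomputable def that (d n : ℕ) (c δ : ℝ) : ℝ :=
  sInf {t : ℝ | 0 ≤ t ∧
    2 * (d : ℝ) ^ 2 * (1 + (⌈Real.logb c (2 * n / t)⌉₊ : ℝ)) * Real.exp (-t) ≤ δ}

/-- The empirical bound B̂_{i,j}. -/
noncomputable def Bhat {d n : ℕ} (α c δ : ℝ) (x : Fin n → Fin d) (i j : Fin d) : ℝ :=
  (Real.sqrt (c * that d n c δ / (2 * (Ncount x i : ℝ))) +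
    Real.sqrt (c * that d n c δ / (2 * (Ncount x i : ℝ)) +
      Real.sqrt (2 * c * Phat α x i j * (1 - Phat α x i j) * that d n c δ / (Ncount x i : ℝ)) +
      ((4 / 3) * that d n c δ + |α - d * α * Phat α x i j|) / (Ncount x i : ℝ))) ^ 2

/-- Group inverse of a square matrix (when it exists). -/
noncomputable def groupInv {d : ℕ} (A : Matrix (Fin d) (Fin d) ℝ) :
    Matrix (Fin d) (Fin d) ℝ :=
  if h : ∃ G, A * G * A = A ∧ G * A * G = G ∧ A * G = G * A then h.choose else 0

/-- The (unique) stationary distribution of `P` (when it exists). -/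
noncomputable def statDist {d : ℕ} (P : Matrix (Fin d) (Fin d) ℝ) : Fin d → ℝ :=
  if h : ∃ w, IsStationary P w then h.choose else 0

/-- The a-skipped sample path (X_a, X_{2a}, ..., X_{(n/a)·a}). -/
def skipPath {d n : ℕ} (a : ℕ) (x : Fin n → Fin d) : Fin (n / a) → Fin d :=
  fun s => x ⟨a * s.1 + (a - 1), by
    have hs := s.isLt
    rcases Nat.eq_zero_or_pos a with h | h
    · subst h; simp [Nat.div_zero] at hs
    · have h2 : a * (s.1 + 1) ≤ a * (n / a) := Nat.mul_le_mul_left a hs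
      have h3 : a * (n / a) ≤ n := Nat.mul_div_le n a
      have h4 : a * (s.1 + 1) = a * s.1 + a := Nat.mul_succ a s.1
      omega⟩

/-- The skip amount A = 2^k chosen by the doubling procedure. -/
noncomputable def Askip {d n : ℕ} (x : Fin n → Fin d) : ℕ :=
  if h : ∃ k : ℕ, 0.31 < gapEstimator (skipPath (2 ^ k) x) ∨ 2 ^ k = n then
    2 ^ Nat.find h
  else n

/-- The doubling-skip estimator γ̃⋆ = 1 - (1 - γ̂⋆(A))^{1/A}. -/
noncomputable def tildeGap {d n : ℕ} (x : Fin n → Fin d) : ℝ :=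
  1 - (1 - gapEstimator (skipPath (Askip x) x)) ^ ((Askip x : ℝ)⁻¹)

/-- Transition matrix with moves into `j` suppressed. -/
noncomputable def avoid {d : ℕ} (P : Matrix (Fin d) (Fin d) ℝ) (j : Fin d) :
    Matrix (Fin d) (Fin d) ℝ :=
  Matrix.of fun k l => if l = j then 0 else P k l

/-- Expected first positive hitting time of `j` starting from `i`:
`E_i[τ_j] = ∑_{t ≥ 0} Pr_i(τ_j > t)`. -/
noncomputable def expHit {d : ℕ} (P : Matrix (Fin d) (Fin d) ℝ) (i j : Fin d) : ℝ :=
  ∑' t : ℕ, ∑ l, ((avoid P j) ^ t) i l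

/-- The mixing time of the chain. -/
noncomputable def mixingTime {d : ℕ} (P : Matrix (Fin d) (Fin d) ℝ) (w : Fin d → ℝ) : ℕ :=
  sInf {t : ℕ | ∀ q : Fin d → ℝ, IsProbVec q →
    ∀ A : Finset (Fin d), |∑ i ∈ A, ((q ᵥ* (P ^ t)) i - w i)| ≤ 1 / 4}

/-- Algorithm 1: smoothed transition probability estimates (α = 1/d). -/
noncomputable def algPhat {d n : ℕ} (x : Fin n → Fin d) : Matrix (Fin d) (Fin d) ℝ :=
  Phat (1 / (d : ℝ)) x

/-- Algorithm 1: stationary distribution of the smoothed estimate. -/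
noncomputable def algPi {d n : ℕ} (x : Fin n → Fin d) : Fin d → ℝ :=
  statDist (algPhat x)

/-- Algorithm 1: spectral gap estimate. -/
noncomputable def algGap {d n : ℕ} (x : Fin n → Fin d) : ℝ :=
  if h : 1 < d then
    1 - max (lamAsc (symPart_isHermitian (Lgen (algPi x) (algPhat x))) ⟨d - 2, by omega⟩)
        |lamAsc (symPart_isHermitian (Lgen (algPi x) (algPhat x))) ⟨0, by omega⟩|
  else 0

/-- Algorithm 1: relative sensitivity κ̂ computed from the group inverse. -/
noncomputable def algKappa {d n : ℕ} (x : Fin n → Fin d) : ℝ :=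
  (1 / 2) * ⨆ j, (groupInv (1 - algPhat x) j j - ⨅ i, groupInv (1 - algPhat x) i j)

/-- Algorithm 1: bound b̂ on the stationary distribution error. -/
noncomputable def algb {d n : ℕ} (δ : ℝ) (x : Fin n → Fin d) : ℝ :=
  algKappa x * ⨆ i, ⨆ j, Bhat (1 / (d : ℝ)) 1.1 δ x i j

/-- Algorithm 1: the quantity ρ̂. -/
noncomputable def algRho {d n : ℕ} (δ : ℝ) (x : Fin n → Fin d) : ℝ :=
  (1 / 2) * ⨆ i, max (algb δ x / algPi x i) (algb δ x / max 0 (algPi x i - algb δ x))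

/-- Algorithm 1: bound ŵ on the spectral gap error. -/
noncomputable def algw {d n : ℕ} (δ : ℝ) (x : Fin n → Fin d) : ℝ :=
  2 * algRho δ x + algRho δ x ^ 2 +
    (1 + 2 * algRho δ x + algRho δ x ^ 2) *
      Real.sqrt (∑ i, ∑ j, (algPi x i / algPi x j) * Bhat (1 / (d : ℝ)) 1.1 δ x i j ^ 2)

/-- Observable lower bound on the minimum stationary probability from Algorithm 1. -/
noncomputable def algPiLB {d n : ℕ} (δ : ℝ) (x : Fin n → Fin d) : ℝ :=
  ⨅ i, max 0 (algPi x i - algb δ x)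

/-- Observable lower bound on the spectral gap from Algorithm 1. -/
noncomputable def algGapLB {d n : ℕ} (δ : ℝ) (x : Fin n → Fin d) : ℝ :=
  max 0 (algGap x - algw δ x)

/-!
Le Cam's two-point method. Pick a state `s` with initial mass `q s ≤ 1/2` and let `P_r` be the
chain on `Fin 2` that leaves `s` with probability `r` and enters it with probability `π̄`. For
`r ∈ [1/2, 3/4]` this chain is ergodic and reversible, has absolute spectral gap `π̄ + r` and
minimum stationary probability at least `π̄`. The matrices `P_{1/2}` and `P_{3/4}` differ only in
the row of `s`, and a path of length `n ≤ 1/(4π̄)` rarely visits `s`: by induction on `n` the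
ℓ¹ distance between the two path laws is at most `(2/3)(q s + π̄ n) ≤ 1/2`. Since the two gaps
are `1/4` apart, every estimate is off by at least `1/8` under one of the chains, so the two
error probabilities add up to at least `3/4`.
-/

lemma sum_fun_fin_succ {α : Type*} [Fintype α] {n : ℕ}
    (f : (Fin (n + 1) → α) → ℝ) :
    ∑ x, f x = ∑ i, ∑ y : Fin n → α, f (Fin.cons i y) := by
  rw [← Fintype.sum_prod_type', ← Fintype.sum_equiv (Fin.consEquiv fun _ => α) _ f (fun _ => rfl)]
  rfl

section PathLaw

variable {d : ℕ}

lemma pathProb_cons {n : ℕ} (q : Fin d → ℝ) (P : Matrix (Fin d) (Fin d) ℝ) (i : Fin d)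
    (y : Fin n → Fin d) : pathProb q P (Fin.cons i y) = q i * pathProb (P i) P y := by
  unfold pathProb
  rw [Fin.prod_univ_succ]
  simp only [Fin.val_zero, Fin.cons_zero, Fin.val_succ, Nat.add_one_ne_zero,
    if_false, Nat.add_sub_cancel, Fin.cons_succ]
  congr 1
  refine Finset.prod_congr rfl fun t _ => ?_
  rcases t with ⟨_ | t, ht⟩ <;> rfl

lemma pathProb_nonneg {n : ℕ} {q : Fin d → ℝ} {P : Matrix (Fin d) (Fin d) ℝ}
    (hq : ∀ i, 0 ≤ q i) (hP : ∀ i j, 0 ≤ P i j) (x : Fin n → Fin d) :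
    0 ≤ pathProb q P x :=
  Finset.prod_nonneg fun t _ => by split_ifs <;> simp only [hq, hP]

lemma IsStochastic.isProbVec_row {P : Matrix (Fin d) (Fin d) ℝ} (hP : IsStochastic P)
    (i : Fin d) : IsProbVec (P i) :=
  ⟨hP.1 i, hP.2 i⟩

lemma sum_pathProb {P : Matrix (Fin d) (Fin d) ℝ} (hP : IsStochastic P) (n : ℕ)
    {q : Fin d → ℝ} (hq : IsProbVec q) : ∑ x : Fin n → Fin d, pathProb q P x = 1 := by
  induction n generalizing q with
  | zero => simp [pathProb]
  | succ n ih =>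
    simp only [sum_fun_fin_succ, pathProb_cons, ← Finset.mul_sum, ih (hP.isProbVec_row _),
      mul_one, hq.2]

lemma sum_abs_pathProb_sub_le_sum_abs_sub {P : Matrix (Fin d) (Fin d) ℝ} (hP : IsStochastic P)
    (n : ℕ) (p p' : Fin d → ℝ) :
    ∑ x : Fin n → Fin d, |pathProb p P x - pathProb p' P x| ≤ ∑ j, |p j - p' j| := by
  cases n with
  | zero => simpa [pathProb] using Finset.sum_nonneg fun j _ => abs_nonneg (p j - p' j)
  | succ n =>
    rw [sum_fun_fin_succ]
    refine Finset.sum_le_sum fun i _ => le_of_eq ?_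
    simp only [pathProb_cons, ← sub_mul, abs_mul,
      abs_of_nonneg (pathProb_nonneg (hP.1 i) hP.1 _), ← Finset.mul_sum,
      sum_pathProb hP n (hP.isProbVec_row i), mul_one]

/-- Condition `hs` says that `c` absorbs the one-step discrepancy of the rows of `s` plus the
cost `c * P₁ s s` of still being at `s` one step later; this makes the induction on `n` close. -/
theorem sum_abs_pathProb_sub_le {P₀ P₁ : Matrix (Fin d) (Fin d) ℝ} {s : Fin d} {c ε : ℝ}
    (h₀ : IsStochastic P₀) (h₁ : IsStochastic P₁) (hrow : ∀ i, i ≠ s → P₀ i = P₁ i)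
    (hs : ∑ j, |P₀ s j - P₁ s j| + c * P₁ s s ≤ c) (hent : ∀ i, i ≠ s → P₁ i s ≤ ε)
    (hc : 0 ≤ c) (hε : 0 ≤ ε) (n : ℕ) {q : Fin d → ℝ} (hq : IsProbVec q) :
    ∑ x : Fin n → Fin d, |pathProb q P₀ x - pathProb q P₁ x| ≤ c * (q s + ε * n) := by
  induction n generalizing q with
  | zero => simpa [pathProb] using mul_nonneg hc (hq.1 s)
  | succ n ih =>
    have step : ∀ i, ∑ y : Fin n → Fin d, |pathProb (P₀ i) P₀ y - pathProb (P₁ i) P₁ y|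
        ≤ c * ((if i = s then 1 else 0) + ε * (n + 1)) := by
      intro i
      have hsplit := calc
        ∑ y : Fin n → Fin d, |pathProb (P₀ i) P₀ y - pathProb (P₁ i) P₁ y|
          ≤ ∑ y : Fin n → Fin d, (|pathProb (P₀ i) P₀ y - pathProb (P₁ i) P₀ y|
              + |pathProb (P₁ i) P₀ y - pathProb (P₁ i) P₁ y|) :=
            Finset.sum_le_sum fun y _ => abs_sub_le _ _ _
        _ ≤ ∑ j, |P₀ i j - P₁ i j| + c * (P₁ i s + ε * n) := by
            rw [Finset.sum_add_distrib]
            exact add_le_add (sum_abs_pathProb_sub_le_sum_abs_sub h₀ n _ _)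
              (ih (h₁.isProbVec_row i))
      by_cases hi : i = s
      · subst hi
        rw [if_pos rfl]
        linarith [mul_nonneg hc hε]
      · rw [if_neg hi, hrow i hi]
        rw [hrow i hi] at hsplit
        simp only [sub_self, abs_zero, Finset.sum_const_zero, zero_add] at hsplit
        linarith [mul_le_mul_of_nonneg_left (hent i hi) hc]
    calc ∑ x : Fin (n + 1) → Fin d, |pathProb q P₀ x - pathProb q P₁ x|
        = ∑ i, q i * ∑ y : Fin n → Fin d, |pathProb (P₀ i) P₀ y - pathProb (P₁ i) P₁ y| := by
          simp only [sum_fun_fin_succ, pathProb_cons, ← mul_sub, abs_mul, abs_of_nonneg (hq.1 _),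
            Finset.mul_sum]
      _ ≤ ∑ i, q i * (c * ((if i = s then 1 else 0) + ε * (n + 1))) :=
          Finset.sum_le_sum fun i _ => mul_le_mul_of_nonneg_left (step i) (hq.1 i)
      _ = c * (q s + ε * ↑(n + 1)) := by
          simp only [mul_add, Finset.sum_add_distrib, mul_ite, mul_one, mul_zero,
            Finset.sum_ite_eq', Finset.mem_univ, if_true, ← Finset.sum_mul, hq.2]
          push_cast
          ring

end PathLaw

/-- Le Cam's two-point bound. -/
lemma one_sub_half_sum_abs_sub_le_of_cover {α : Type*} [Fintype α] {p₀ p₁ : α → ℝ}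
    (hp₀ : ∀ x, 0 ≤ p₀ x) (h₀ : ∑ x, p₀ x = 1) (h₁ : ∑ x, p₁ x = 1)
    {E₀ E₁ : Set α} (hcover : ∀ x, x ∈ E₀ ∨ x ∈ E₁) :
    1 - (∑ x, |p₀ x - p₁ x|) / 2 ≤
      (∑ x, if x ∈ E₀ then p₀ x else 0) + ∑ x, if x ∈ E₁ then p₁ x else 0 := by
  calc 1 - (∑ x, |p₀ x - p₁ x|) / 2 = ∑ x, (p₀ x + p₁ x - |p₀ x - p₁ x|) / 2 := by
        rw [← Finset.sum_div, Finset.sum_sub_distrib, Finset.sum_add_distrib, h₀, h₁]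
        ring
    _ ≤ ∑ x, ((if x ∈ E₀ then p₀ x else 0) + if x ∈ E₁ then p₁ x else 0) := by
        refine Finset.sum_le_sum fun x _ => ?_
        rcases hcover x with h | h <;> split_ifs <;>
          linarith [le_abs_self (p₀ x - p₁ x), neg_abs_le (p₀ x - p₁ x), hp₀ x]
    _ = _ := Finset.sum_add_distrib

lemma IsProbVec.exists_le_half {q : Fin 2 → ℝ} (hq : IsProbVec q) : ∃ s, q s ≤ 1 / 2 := by
  by_contra! h
  linarith [hq.2, Fin.sum_univ_two q, h 0, h 1]

noncomputable def twoStateChain (s : Fin 2) (ε r : ℝ) : Matrix (Fin 2) (Fin 2) ℝ :=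
  Matrix.of fun i j => if i = s then (if j = s then 1 - r else r) else (if j = s then ε else 1 - ε)

noncomputable def twoStateStationary (s : Fin 2) (ε r : ℝ) : Fin 2 → ℝ :=
  fun i => if i = s then ε / (ε + r) else r / (ε + r)

section TwoStateChain

variable {s : Fin 2} {ε r : ℝ}

lemma twoStateChain_isStochastic (hε₀ : 0 ≤ ε) (hε₁ : ε ≤ 1) (hr₀ : 0 ≤ r) (hr₁ : r ≤ 1) :
    IsStochastic (twoStateChain s ε r) := by
  refine ⟨fun i j => ?_, fun i => ?_⟩
  · simp only [twoStateChain, Matrix.of_apply]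
    split_ifs <;> linarith
  · fin_cases s <;> fin_cases i <;> simp [twoStateChain, Fin.sum_univ_two]

lemma twoStateChain_isErgodic (hε₀ : 0 < ε) (hε₁ : ε < 1) (hr₀ : 0 < r) (hr₁ : r < 1) :
    IsErgodic (twoStateChain s ε r) := by
  refine ⟨1, fun i j => ?_⟩
  simp only [pow_one, twoStateChain, Matrix.of_apply]
  split_ifs <;> linarith

lemma twoStateStationary_isStationary (hε : 0 ≤ ε) (hr : 0 ≤ r) (hεr : ε + r ≠ 0) :
    IsStationary (twoStateChain s ε r) (twoStateStationary s ε r) := by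
  refine ⟨⟨fun i => ?_, ?_⟩, fun j => ?_⟩
  · simp only [twoStateStationary]
    split_ifs <;> positivity
  · fin_cases s <;> simp [twoStateStationary, Fin.sum_univ_two, add_comm] <;> field_simp
  · fin_cases s <;> fin_cases j <;> simp [twoStateChain, twoStateStationary, Fin.sum_univ_two] <;>
      field_simp <;> ring

lemma twoStateStationary_isReversible :
    IsReversible (twoStateChain s ε r) (twoStateStationary s ε r) := by
  intro i j
  fin_cases s <;> fin_cases i <;> fin_cases j <;> simp [twoStateChain, twoStateStationary] <;>
    ring

lemma twoStateChain_charpoly_isRoot_iff (μ : ℝ) :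
    (twoStateChain s ε r).charpoly.IsRoot μ ↔ (μ - 1) * (μ - (1 - ε - r)) = 0 := by
  have heval : (twoStateChain s ε r).charpoly.eval μ = (μ - 1) * (μ - (1 - ε - r)) := by
    rw [charpoly_fin_two, trace_fin_two, det_fin_two]
    fin_cases s <;> simp [twoStateChain] <;> ring
  rw [Polynomial.IsRoot.def, heval]

lemma absSpectralGap_twoStateChain (hεr₀ : 0 < ε + r) (hεr₁ : ε + r ≤ 1) :
    absSpectralGap (twoStateChain s ε r) = ε + r := by
  have hset : {x : ℝ | ∃ μ : ℝ, μ ≠ 1 ∧ (twoStateChain s ε r).charpoly.IsRoot μ ∧ x = |μ|}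
      = {1 - ε - r} := by
    ext x
    simp only [twoStateChain_charpoly_isRoot_iff, mul_eq_zero, sub_eq_zero]
    constructor
    · rintro ⟨μ, hμ, rfl | rfl, rfl⟩
      exacts [absurd rfl hμ, abs_of_nonneg (by linarith)]
    · rintro rfl
      exact ⟨1 - ε - r, by linarith, Or.inr rfl, (abs_of_nonneg (by linarith)).symm⟩
  rw [absSpectralGap, hset, csSup_singleton]
  ring

lemma le_minEntry_twoStateStationary (hε : 0 < ε) (hεr : ε ≤ r) (hr : ε + r ≤ 1) :
    ε ≤ minEntry (twoStateStationary s ε r) := by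
  refine le_ciInf fun i => ?_
  simp only [twoStateStationary]
  split_ifs <;> rw [le_div_iff₀ (by linarith)] <;> nlinarith

lemma three_quarters_le_prob_twoStateChain_add_prob (hε₀ : 0 ≤ ε) (hε₁ : ε ≤ 1) {n : ℕ}
    (hεn : ε * n ≤ 1 / 4) {q : Fin 2 → ℝ} (hq : IsProbVec q) (hqs : q s ≤ 1 / 2)
    {E₀ E₁ : Set (Fin n → Fin 2)} (hcover : ∀ x, x ∈ E₀ ∨ x ∈ E₁) :
    3 / 4 ≤ prob q (twoStateChain s ε (1 / 2)) E₀ + prob q (twoStateChain s ε (3 / 4)) E₁ := by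
  have hP₀ := twoStateChain_isStochastic (s := s) hε₀ hε₁
    (by norm_num : (0 : ℝ) ≤ 1 / 2) (by norm_num)
  have hP₁ := twoStateChain_isStochastic (s := s) hε₀ hε₁
    (by norm_num : (0 : ℝ) ≤ 3 / 4) (by norm_num)
  -- `c = 2/3` solves `1/2 + c * (1/4) = c`: the rows of `s` are `1/2` apart in ℓ¹,
  -- and the second chain stays at `s` with probability `1/4`.
  have hdist := sum_abs_pathProb_sub_le (s := s) (c := 2 / 3) hP₀ hP₁
    (fun i hi => by ext j; simp [twoStateChain, hi])
    (by fin_cases s <;> simp [twoStateChain, Fin.sum_univ_two] <;> norm_num)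
    (fun i hi => by simp [twoStateChain, hi]) (by norm_num) hε₀ n hq
  have hmass := one_sub_half_sum_abs_sub_le_of_cover (pathProb_nonneg hq.1 hP₀.1)
    (sum_pathProb hP₀ n hq) (sum_pathProb hP₁ n hq) hcover
  unfold prob
  linarith

end TwoStateChain

/-- lower bound for two-state chains. -/
theorem statement0 (pibar : ℝ) (hpibar0 : 0 < pibar) (hpibar1 : pibar < 1 / 4)
    (n : ℕ) (hn : (n : ℝ) ≤ 1 / (4 * pibar))
    (est : (Fin n → Fin 2) → ℝ)
    (q : Fin 2 → ℝ) (hq : IsProbVec q) :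
    ∃ (P : Matrix (Fin 2) (Fin 2) ℝ) (w : Fin 2 → ℝ),
      IsStochastic P ∧ IsErgodic P ∧ IsStationary P w ∧ IsReversible P w ∧
      1 / 2 ≤ absSpectralGap P ∧ pibar ≤ minEntry w ∧
      3 / 8 ≤ prob q P {x | 1 / 8 ≤ |est x - absSpectralGap P|} := by
  obtain ⟨s, hqs⟩ := hq.exists_le_half
  have hgap : ∀ r, 1 / 2 ≤ r → r ≤ 3 / 4 → absSpectralGap (twoStateChain s pibar r) = pibar + r :=
    fun r h₁ h₂ => absSpectralGap_twoStateChain (by linarith) (by linarith)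
  suffices ∃ r, 1 / 2 ≤ r ∧ r ≤ 3 / 4 ∧ 3 / 8 ≤ prob q (twoStateChain s pibar r)
      {x | 1 / 8 ≤ |est x - absSpectralGap (twoStateChain s pibar r)|} by
    obtain ⟨r, h₁, h₂, hprob⟩ := this
    exact ⟨twoStateChain s pibar r, twoStateStationary s pibar r,
      twoStateChain_isStochastic (by linarith) (by linarith) (by linarith) (by linarith),
      twoStateChain_isErgodic (by linarith) (by linarith) (by linarith) (by linarith),
      twoStateStationary_isStationary (by linarith) (by linarith) (by linarith),
      twoStateStationary_isReversible, by linarith [hgap r h₁ h₂],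
      le_minEntry_twoStateStationary hpibar0 (by linarith) (by linarith), hprob⟩
  have hpibar_n : pibar * n ≤ 1 / 4 := by
    rw [le_div_iff₀ (by positivity)] at hn
    linarith
  have hcover : ∀ x, x ∈ {x | 1 / 8 ≤ |est x - absSpectralGap (twoStateChain s pibar (1 / 2))|}
      ∨ x ∈ {x | 1 / 8 ≤ |est x - absSpectralGap (twoStateChain s pibar (3 / 4))|} := by
    intro x
    simp only [Set.mem_ofPred_eq, hgap (1 / 2) le_rfl (by norm_num),
      hgap (3 / 4) (by norm_num) le_rfl]
    by_contra! h
    linarith [(abs_lt.1 h.1).2, (abs_lt.1 h.2).1]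
  have hmass := three_quarters_le_prob_twoStateChain_add_prob hpibar0.le (by linarith)
    hpibar_n hq hqs hcover
  rcases le_or_gt (3 / 8) (prob q (twoStateChain s pibar (1 / 2))
      {x | 1 / 8 ≤ |est x - absSpectralGap (twoStateChain s pibar (1 / 2))|}) with h | h
  · exact ⟨1 / 2, le_rfl, by norm_num, h⟩
  · refine ⟨3 / 4, by norm_num, le_rfl, ?_⟩
    linarith

end MCEst
end

section
/- For n ≥ 2, the expected empirical doublet matrix satisfies ‖ Diag(π)^{-1/2} ( E[M̂] − M ) Diag(π)^{-1/2} ‖ ≤ 1 / ( (n−1) γ⋆ π⋆ ), where ‖·‖ is the spectral norm, M = Diag(π) P, and E[M̂] = (1/(n−1)) Σ_{t=1}^{n−1} Diag(π^{(t)}) P. -/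
/-!
Reversibility makes `L = Diag(π)^{1/2} P Diag(π)^{-1/2}` (`Lgen w P`) symmetric with `‖L‖ ≤ 1`,
and the matrix to be bounded factors as `Diag(r) L` with `r_i = (π̄_i - π_i) / π_i`, where `π̄` is
the averaged marginal `(n-1)⁻¹ ∑_t π^{(t)}`. In the coordinates `x ↦ x / √π` the deviation
`π^{(t)} - π` becomes `L^t u` with `u ⊥ √π` and `‖u‖² = χ²(π^{(1)} ‖ π) ≤ 1 / π⋆`. On `√π^⊥`, `L`
agrees with its deflation `L - √π √πᵀ`, whose nonzero eigenvalues are eigenvalues `≠ 1` of `P`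
(ergodicity makes the eigenvalue `1` simple), so it contracts by `1 - γ⋆`. Hence
`|π^{(t)}_i - π_i| ≤ (1 - γ⋆)^t √(π_i / π⋆)`, and the geometric series gives
`|r_i| ≤ 1 / ((n-1) γ⋆ π⋆)`.
-/

open Finset Matrix Real MeasureTheory
open scoped Classical BigOperators

open scoped Matrix.Norms.L2Operator

namespace Matrix

variable {n : Type*} [Fintype n]

theorem dotProduct_sub_vecMulVec_mulVec {R : Type*} [CommRing R] {A : Matrix n n R}
    {v : n → R} (hvA : v ᵥ* A = v) (hvv : v ⬝ᵥ v = 1) (x : n → R) :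
    v ⬝ᵥ ((A - vecMulVec v v) *ᵥ x) = 0 := by
  rw [sub_mulVec, dotProduct_sub, dotProduct_mulVec, dotProduct_mulVec, hvA, vecMul_vecMulVec,
    hvv, one_smul, sub_self]

theorem sub_vecMulVec_mulVec_of_dotProduct_eq_zero {R : Type*} [CommRing R] {A : Matrix n n R}
    {v x : n → R} (hx : v ⬝ᵥ x = 0) : (A - vecMulVec v v) *ᵥ x = A *ᵥ x := by
  rw [sub_mulVec, vecMulVec_mulVec, hx]
  simp

variable [DecidableEq n]

theorem isRoot_charpoly_iff_exists_mulVec_eq_smul {R : Type*} [CommRing R] [IsDomain R]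
    {A : Matrix n n R} {μ : R} : A.charpoly.IsRoot μ ↔ ∃ v ≠ 0, A *ᵥ v = μ • v := by
  rw [← charpoly_toLin', ← Module.End.hasEigenvalue_iff_isRoot_charpoly]
  simp [Module.End.hasEigenvalue_iff, Submodule.ne_bot_iff, and_comm]

theorem pow_mulVec_eq_pow_smul {R : Type*} [CommSemiring R] {A : Matrix n n R} {μ : R}
    {v : n → R} (h : A *ᵥ v = μ • v) (k : ℕ) : A ^ k *ᵥ v = μ ^ k • v := by
  induction k with
  | zero => simp
  | succ k ih => rw [pow_succ', ← mulVec_mulVec, ih, mulVec_smul, h, smul_smul, pow_succ]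

theorem vecMul_pow_eq_self {R : Type*} [Semiring R] {A : Matrix n n R} {v : n → R}
    (h : v ᵥ* A = v) (k : ℕ) : v ᵥ* A ^ k = v := by
  induction k with
  | zero => simp
  | succ k ih => rw [pow_succ, ← vecMul_vecMul, ih, h]

theorem IsHermitian.l2_opNorm_eq {𝕜 : Type*} [RCLike 𝕜] {A : Matrix n n 𝕜}
    (hA : A.IsHermitian) : ‖A‖ = ‖hA.eigenvalues‖ := by
  conv_lhs => rw [hA.spectral_theorem, Unitary.conjStarAlgAut_apply]
  rw [CStarRing.norm_mul_mem_unitary _ (Unitary.star_mem hA.eigenvectorUnitary.2),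
    CStarRing.norm_coe_unitary_mul, l2_opNorm_diagonal]
  simp [Pi.norm_def]

theorem IsHermitian.l2_opNorm_le {𝕜 : Type*} [RCLike 𝕜] {A : Matrix n n 𝕜}
    (hA : A.IsHermitian) {c : ℝ} (hc : 0 ≤ c)
    (h : ∀ (μ : ℝ) (v : n → 𝕜), v ≠ 0 → A *ᵥ v = μ • v → |μ| ≤ c) : ‖A‖ ≤ c := by
  rw [hA.l2_opNorm_eq, pi_norm_le_iff_of_nonneg hc]
  intro i
  refine h _ _ (fun h0 => hA.eigenvectorBasis.orthonormal.ne_zero i ?_)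
    (hA.mulVec_eigenvectorBasis i)
  ext j
  exact congrFun h0 j

/-- `A` preserves the orthogonal complement of `v` and agrees there with its deflation. -/
theorem norm_pow_mulVec_le_of_dotProduct_eq_zero {A : Matrix n n ℝ} {v : n → ℝ}
    (hvA : v ᵥ* A = v) {c : ℝ} (hc : ‖A - vecMulVec v v‖ ≤ c) {u : n → ℝ} (hu : v ⬝ᵥ u = 0)
    (t : ℕ) : ‖WithLp.toLp 2 (A ^ t *ᵥ u)‖ ≤ c ^ t * ‖WithLp.toLp 2 u‖ := by
  induction t with
  | zero => simp
  | succ t ih =>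
    have hperp : v ⬝ᵥ (A ^ t *ᵥ u) = 0 := by
      rw [dotProduct_mulVec, vecMul_pow_eq_self hvA, hu]
    rw [pow_succ', ← mulVec_mulVec, ← sub_vecMulVec_mulVec_of_dotProduct_eq_zero hperp]
    calc ‖WithLp.toLp 2 ((A - vecMulVec v v) *ᵥ (A ^ t *ᵥ u))‖
        ≤ ‖A - vecMulVec v v‖ * ‖WithLp.toLp 2 (A ^ t *ᵥ u)‖ :=
          l2_opNorm_mulVec _ (WithLp.toLp 2 _)
      _ ≤ c * (c ^ t * ‖WithLp.toLp 2 u‖) :=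
          mul_le_mul hc ih (norm_nonneg _) ((norm_nonneg _).trans hc)
      _ = c ^ (t + 1) * ‖WithLp.toLp 2 u‖ := by ring

end Matrix

namespace MCEst

section Stochastic

variable {d : ℕ} {P : Matrix (Fin d) (Fin d) ℝ}

theorem IsStochastic.mulVec_one (hP : IsStochastic P) : P *ᵥ 1 = 1 := by
  ext i
  simp [mulVec, dotProduct, hP.2 i]

theorem IsStochastic.abs_le_one (hP : IsStochastic P) {μ : ℝ} {v : Fin d → ℝ} (hv : v ≠ 0)
    (h : P *ᵥ v = μ • v) : |μ| ≤ 1 := by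
  obtain ⟨i₁, hi₁⟩ := Function.ne_iff.mp hv
  obtain ⟨i₀, -, hmax⟩ := Finset.exists_max_image univ (fun i => |v i|) ⟨i₁, mem_univ i₁⟩
  have hpos : 0 < |v i₀| := (abs_pos.mpr hi₁).trans_le (hmax i₁ (mem_univ i₁))
  have key : |μ| * |v i₀| ≤ |v i₀| :=
    calc |μ| * |v i₀| = |∑ j, P i₀ j * v j| := by
          rw [← abs_mul, ← smul_eq_mul, ← Pi.smul_apply, ← h]; rfl
      _ ≤ ∑ j, P i₀ j * |v j| := by
          refine (abs_sum_le_sum_abs _ _).trans_eq (sum_congr rfl fun j _ => ?_)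
          rw [abs_mul, abs_of_nonneg (hP.1 i₀ j)]
      _ ≤ ∑ j, P i₀ j * |v i₀| :=
          sum_le_sum fun j _ => mul_le_mul_of_nonneg_left (hmax j (mem_univ j)) (hP.1 i₀ j)
      _ = |v i₀| := by rw [← sum_mul, hP.2 i₀, one_mul]
  nlinarith

theorem eq_of_mulVec_eq_self_of_pos {ι : Type*} [Fintype ι] {Q : Matrix ι ι ℝ}
    (hQ : ∀ i j, 0 < Q i j) (hQ1 : Q *ᵥ 1 = 1) {y : ι → ℝ} (hy : Q *ᵥ y = y) (i j : ι) :
    y i = y j := by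
  obtain ⟨i₀, -, hmax⟩ := Finset.exists_max_image univ y ⟨i, mem_univ i⟩
  -- maximum principle: `y i₀` is a weighted average of values `≤ y i₀` with positive weights
  have hsum : ∑ l, Q i₀ l * (y i₀ - y l) = 0 := by
    have h1 := congrFun hQ1 i₀
    have hy0 := congrFun hy i₀
    simp only [mulVec, dotProduct, Pi.one_apply, mul_one] at h1 hy0
    simp only [mul_sub, sum_sub_distrib, ← sum_mul, h1, hy0, one_mul, sub_self]
  have hzero := (sum_eq_zero_iff_of_nonneg fun l _ =>
    mul_nonneg (hQ i₀ l).le (sub_nonneg.mpr (hmax l (mem_univ l)))).mp hsum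
  have hconst : ∀ l, y l = y i₀ := fun l =>
    (sub_eq_zero.mp ((mul_eq_zero.mp (hzero l (mem_univ l))).resolve_left (hQ i₀ l).ne')).symm
  rw [hconst i, hconst j]

theorem IsErgodic.eq_of_mulVec_eq_self (hP : IsStochastic P) (herg : IsErgodic P)
    {y : Fin d → ℝ} (hy : P *ᵥ y = y) (i j : Fin d) : y i = y j := by
  obtain ⟨k, hk⟩ := herg
  have hfix : ∀ {x : Fin d → ℝ}, P *ᵥ x = x → P ^ k *ᵥ x = x := fun hx => by
    simpa using pow_mulVec_eq_pow_smul (A := P) (μ := 1) (by simpa using hx) k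
  exact eq_of_mulVec_eq_self_of_pos hk (hfix hP.mulVec_one) (hfix hy) i j

theorem IsErgodic.eq_zero_of_mulVec_eq_neg (hP : IsStochastic P) (herg : IsErgodic P)
    {y : Fin d → ℝ} (hy : P *ᵥ y = -y) : y = 0 := by
  obtain ⟨k, hk⟩ := herg
  have hk2 : ∀ i j, 0 < (P ^ (k + k)) i j := fun i j => by
    rw [pow_add, mul_apply]
    exact sum_pos (fun l _ => mul_pos (hk i l) (hk l j)) ⟨i, mem_univ i⟩
  have hfix : ∀ {x : Fin d → ℝ} {μ : ℝ}, P *ᵥ x = μ • x → μ ^ 2 = 1 → P ^ (k + k) *ᵥ x = x :=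
    fun hx hμ => by rw [pow_mulVec_eq_pow_smul hx, ← two_mul, pow_mul, hμ, one_pow, one_smul]
  have hconst := eq_of_mulVec_eq_self_of_pos hk2 (hfix (μ := 1) (by simpa using hP.mulVec_one)
    (by norm_num)) (hfix (μ := -1) (by simpa using hy) (by norm_num))
  ext i
  have hPy : (P *ᵥ y) i = y i := by
    simp only [mulVec, dotProduct, hconst _ i, ← sum_mul, hP.2 i, one_mul]
  have hneg : (P *ᵥ y) i = -y i := congrFun hy i
  show y i = 0
  linarith

theorem IsErgodic.abs_lt_one (hP : IsStochastic P) (herg : IsErgodic P) {μ : ℝ} (hμ : μ ≠ 1)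
    {v : Fin d → ℝ} (hv : v ≠ 0) (h : P *ᵥ v = μ • v) : |μ| < 1 := by
  refine (hP.abs_le_one hv h).lt_of_ne fun habs => ?_
  rcases (abs_eq zero_le_one).mp habs with rfl | rfl
  · exact hμ rfl
  · exact hv (herg.eq_zero_of_mulVec_eq_neg hP (by simpa using h))

end Stochastic

section SpectralGap

variable {d : ℕ} {P : Matrix (Fin d) (Fin d) ℝ}

theorem _root_.Real.sSup_lt_of_finite {S : Set ℝ} (hS : S.Finite) {a : ℝ} (ha : 0 < a)
    (h : ∀ x ∈ S, x < a) : sSup S < a := by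
  rcases S.eq_empty_or_nonempty with rfl | hne
  · rwa [Real.sSup_empty]
  · exact (hS.csSup_lt_iff hne).mpr h

theorem abs_le_one_sub_absSpectralGap (hP : IsStochastic P) {μ : ℝ} (hμ : μ ≠ 1)
    {v : Fin d → ℝ} (hv : v ≠ 0) (h : P *ᵥ v = μ • v) : |μ| ≤ 1 - absSpectralGap P := by
  rw [absSpectralGap, sub_sub_cancel]
  refine le_csSup ⟨1, ?_⟩ ⟨μ, hμ, isRoot_charpoly_iff_exists_mulVec_eq_smul.mpr ⟨v, hv, h⟩, rfl⟩
  rintro _ ⟨ν, -, hν, rfl⟩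
  obtain ⟨x, hx, hPx⟩ := isRoot_charpoly_iff_exists_mulVec_eq_smul.mp hν
  exact hP.abs_le_one hx hPx

theorem absSpectralGap_le_one : absSpectralGap P ≤ 1 := by
  rw [absSpectralGap, sub_le_self_iff]
  exact Real.sSup_nonneg fun _ ⟨μ, _, _, hx⟩ => hx ▸ abs_nonneg μ

theorem IsErgodic.absSpectralGap_pos (hP : IsStochastic P) (herg : IsErgodic P) :
    0 < absSpectralGap P := by
  rw [absSpectralGap, sub_pos]
  refine Real.sSup_lt_of_finite ?_ one_pos ?_
  · refine ((Polynomial.finite_setOfPred_isRoot P.charpoly_monic.ne_zero).image abs).subset ?_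
    rintro _ ⟨μ, -, hμ, rfl⟩
    exact ⟨μ, hμ, rfl⟩
  · rintro _ ⟨μ, hμ1, hμ, rfl⟩
    obtain ⟨v, hv, h⟩ := isRoot_charpoly_iff_exists_mulVec_eq_smul.mp hμ
    exact herg.abs_lt_one hP hμ1 hv h

end SpectralGap

section Symmetrization

variable {d : ℕ} {w : Fin d → ℝ}

theorem Lgen_one (hw : ∀ i, 0 < w i) : Lgen w (1 : Matrix (Fin d) (Fin d) ℝ) = 1 := by
  ext i j
  by_cases h : i = j
  · subst h; simp [Lgen, (Real.sqrt_pos.mpr (hw i)).ne']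
  · simp [Lgen, one_apply, h]

theorem Lgen_mul (hw : ∀ i, 0 < w i) (A B : Matrix (Fin d) (Fin d) ℝ) :
    Lgen w A * Lgen w B = Lgen w (A * B) := by
  ext i j
  simp only [Lgen, mul_apply, of_apply, mul_sum, sum_div]
  refine sum_congr rfl fun l _ => ?_
  field_simp [(Real.sqrt_pos.mpr (hw l)).ne']

theorem Lgen_pow (hw : ∀ i, 0 < w i) (P : Matrix (Fin d) (Fin d) ℝ) (t : ℕ) :
    Lgen w P ^ t = Lgen w (P ^ t) := by
  induction t with
  | zero => rw [pow_zero, pow_zero, Lgen_one hw]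
  | succ t ih => rw [pow_succ, ih, Lgen_mul hw, pow_succ]

theorem vecMul_Lgen (hw : ∀ i, 0 < w i) (a : Fin d → ℝ) (M : Matrix (Fin d) (Fin d) ℝ) :
    (fun i => a i / √(w i)) ᵥ* Lgen w M = fun j => (a ᵥ* M) j / √(w j) := by
  ext j
  simp only [vecMul, dotProduct, Lgen, of_apply, sum_div]
  refine sum_congr rfl fun i _ => ?_
  field_simp [(Real.sqrt_pos.mpr (hw i)).ne']

variable {P : Matrix (Fin d) (Fin d) ℝ}

theorem IsReversible.isHermitian_Lgen (hrev : IsReversible P w) (hw : ∀ i, 0 < w i) :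
    (Lgen w P).IsHermitian := by
  ext i j
  have hsq : ∀ i, √(w i) * √(w i) = w i := fun i => Real.mul_self_sqrt (hw i).le
  simp only [conjTranspose_apply, star_trivial, Lgen, of_apply]
  rw [div_eq_div_iff (Real.sqrt_pos.mpr (hw i)).ne' (Real.sqrt_pos.mpr (hw j)).ne']
  linear_combination P j i * hsq j - P i j * hsq i - hrev i j

theorem IsStationary.sqrt_vecMul_Lgen (hst : IsStationary P w) (hw : ∀ i, 0 < w i) :
    (fun i => √(w i)) ᵥ* Lgen w P = fun i => √(w i) := by
  have hvec : w ᵥ* P = w := funext hst.2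
  simpa only [Real.div_sqrt, hvec] using vecMul_Lgen hw w P

theorem div_sqrt_ne_zero (hw : ∀ i, 0 < w i) {x : Fin d → ℝ} (hx : x ≠ 0) :
    (fun i => x i / √(w i)) ≠ 0 := by
  refine fun h0 => hx (funext fun i => ?_)
  simpa [(Real.sqrt_pos.mpr (hw i)).ne'] using congrFun h0 i

theorem mulVec_div_sqrt_of_Lgen_mulVec (hw : ∀ i, 0 < w i) {μ : ℝ} {x : Fin d → ℝ}
    (h : Lgen w P *ᵥ x = μ • x) :
    P *ᵥ (fun i => x i / √(w i)) = μ • fun i => x i / √(w i) := by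
  ext i
  have hi := congrFun h i
  simp only [mulVec, dotProduct, Lgen, of_apply, Pi.smul_apply, smul_eq_mul] at hi ⊢
  have hwi := (Real.sqrt_pos.mpr (hw i)).ne'
  calc ∑ j, P i j * (x j / √(w j)) = (∑ j, √(w i) * P i j / √(w j) * x j) / √(w i) := by
        rw [sum_div]
        refine sum_congr rfl fun j _ => ?_
        field_simp
    _ = μ * (x i / √(w i)) := by rw [hi, mul_div_assoc]

theorem l2_opNorm_Lgen_le_one (hP : IsStochastic P) (hrev : IsReversible P w)
    (hw : ∀ i, 0 < w i) : ‖Lgen w P‖ ≤ 1 :=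
  (hrev.isHermitian_Lgen hw).l2_opNorm_le zero_le_one fun _ _ hx h =>
    hP.abs_le_one (div_sqrt_ne_zero hw hx) (mulVec_div_sqrt_of_Lgen_mulVec hw h)

theorem IsErgodic.eq_zero_of_Lgen_mulVec_eq_self (hP : IsStochastic P) (herg : IsErgodic P)
    (hw : ∀ i, 0 < w i) {x : Fin d → ℝ} (hx : Lgen w P *ᵥ x = x)
    (hvx : (fun i => √(w i)) ⬝ᵥ x = 0) : x = 0 := by
  have hy := mulVec_div_sqrt_of_Lgen_mulVec hw (μ := 1) (by rwa [one_smul])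
  rw [one_smul] at hy
  ext i
  have hxc : ∀ j, √(w j) * x j = x i / √(w i) * w j := fun j => by
    rw [← herg.eq_of_mulVec_eq_self hP hy j i]
    field_simp [(Real.sqrt_pos.mpr (hw j)).ne']
    rw [Real.sq_sqrt (hw j).le, mul_comm]
  have hc : x i / √(w i) * ∑ j, w j = 0 := by
    rw [mul_sum, ← hvx]
    exact (sum_congr rfl fun j _ => hxc j).symm
  have hsum : ∑ j, w j ≠ 0 := (sum_pos (fun j _ => hw j) ⟨i, mem_univ i⟩).ne'
  simpa [(Real.sqrt_pos.mpr (hw i)).ne', hsum] using hc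

theorem l2_opNorm_Lgen_sub_vecMulVec_le (hP : IsStochastic P) (herg : IsErgodic P)
    (hst : IsStationary P w) (hrev : IsReversible P w) (hw : ∀ i, 0 < w i) :
    ‖Lgen w P - vecMulVec (fun i => √(w i)) (fun i => √(w i))‖ ≤ 1 - absSpectralGap P := by
  set v : Fin d → ℝ := fun i => √(w i)
  have hvv : v ⬝ᵥ v = 1 := by
    simp only [v, dotProduct, Real.mul_self_sqrt (hw _).le, hst.1.2]
  have hT : (Lgen w P - vecMulVec v v).IsHermitian :=
    (hrev.isHermitian_Lgen hw).sub (by ext; simp [vecMulVec, mul_comm])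
  refine hT.l2_opNorm_le (sub_nonneg.mpr absSpectralGap_le_one) fun μ x hx h => ?_
  rcases eq_or_ne μ 0 with rfl | hμ0
  · simpa using absSpectralGap_le_one
  have hvx : v ⬝ᵥ x = 0 := by
    have := dotProduct_sub_vecMulVec_mulVec (hst.sqrt_vecMul_Lgen hw) hvv x
    rw [h, dotProduct_smul, smul_eq_mul] at this
    exact (mul_eq_zero.mp this).resolve_left hμ0
  rw [sub_vecMulVec_mulVec_of_dotProduct_eq_zero hvx] at h
  have hμ1 : μ ≠ 1 := by
    rintro rfl
    exact hx (herg.eq_zero_of_Lgen_mulVec_eq_self hP hw (by simpa using h) hvx)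
  exact abs_le_one_sub_absSpectralGap hP hμ1 (div_sqrt_ne_zero hw hx)
    (mulVec_div_sqrt_of_Lgen_mulVec hw h)

end Symmetrization

section Convergence

variable {d : ℕ} {w : Fin d → ℝ}

theorem minEntry_le (hw : ∀ i, 0 ≤ w i) (i : Fin d) : minEntry w ≤ w i :=
  ciInf_le ⟨0, Set.forall_mem_range.mpr hw⟩ i

theorem minEntry_nonneg (hw : ∀ i, 0 ≤ w i) : 0 ≤ minEntry w := Real.iInf_nonneg hw

theorem minEntry_pos [Nonempty (Fin d)] (hw : ∀ i, 0 < w i) : 0 < minEntry w := by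
  obtain ⟨i, hi⟩ := exists_eq_ciInf_of_finite (f := w)
  rw [minEntry, ← hi]
  exact hw i

theorem sum_sq_sub_div_le [Nonempty (Fin d)] {q : Fin d → ℝ} (hq : IsProbVec q)
    (hw : IsProbVec w) (hpos : ∀ i, 0 < w i) :
    ∑ i, (q i - w i) ^ 2 / w i ≤ 1 / minEntry w := by
  have hexpand : ∀ i, (q i - w i) ^ 2 / w i = q i ^ 2 / w i - 2 * q i + w i := fun i => by
    field_simp [(hpos i).ne']
    ring
  have hle : ∀ i, q i ^ 2 / w i ≤ q i / minEntry w := fun i => by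
    have hq1 : q i ≤ 1 := hq.2 ▸ single_le_sum (fun j _ => hq.1 j) (mem_univ i)
    calc q i ^ 2 / w i ≤ q i / w i :=
          div_le_div_of_nonneg_right (by nlinarith [hq.1 i]) (hpos i).le
      _ ≤ q i / minEntry w :=
          div_le_div_of_nonneg_left (hq.1 i) (minEntry_pos hpos) (minEntry_le hw.1 i)
  calc ∑ i, (q i - w i) ^ 2 / w i = ∑ i, q i ^ 2 / w i - 1 := by
        rw [sum_congr rfl fun i _ => hexpand i, sum_add_distrib, sum_sub_distrib, ← mul_sum,
          hq.2, hw.2]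
        ring
    _ ≤ ∑ i, q i / minEntry w := by linarith [sum_le_sum fun i (_ : i ∈ univ) => hle i]
    _ = 1 / minEntry w := by rw [← sum_div, hq.2]

variable {P : Matrix (Fin d) (Fin d) ℝ}

theorem vecMul_pow_sub_eq_sqrt_mul (hst : IsStationary P w) (hrev : IsReversible P w)
    (hw : ∀ i, 0 < w i) (q : Fin d → ℝ) (t : ℕ) (j : Fin d) :
    (q ᵥ* P ^ t) j - w j = √(w j) * (Lgen w P ^ t *ᵥ fun i => (q i - w i) / √(w i)) j := by
  have hwP : w ᵥ* P ^ t = w := vecMul_pow_eq_self (funext hst.2) t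
  have hsymm : (Lgen w P ^ t)ᵀ = Lgen w P ^ t :=
    (conjTranspose_eq_transpose_of_trivial _).symm.trans ((hrev.isHermitian_Lgen hw).pow t)
  have hdev := vecMul_Lgen hw (q - w) (P ^ t)
  simp only [Pi.sub_apply] at hdev
  rw [← vecMul_transpose, hsymm, Lgen_pow hw, hdev, sub_vecMul, hwP]
  exact (mul_div_cancel₀ _ (Real.sqrt_pos.mpr (hw j)).ne').symm

theorem abs_vecMul_pow_sub_le (hP : IsStochastic P) (herg : IsErgodic P)
    (hst : IsStationary P w) (hrev : IsReversible P w) (hw : ∀ i, 0 < w i) {q : Fin d → ℝ}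
    (hq : IsProbVec q) (t : ℕ) (j : Fin d) :
    |(q ᵥ* P ^ t) j - w j| ≤ (1 - absSpectralGap P) ^ t * √(w j / minEntry w) := by
  have : Nonempty (Fin d) := ⟨j⟩
  set u : Fin d → ℝ := fun i => (q i - w i) / √(w i)
  have hu : (fun i => √(w i)) ⬝ᵥ u = 0 := by
    simp only [dotProduct, u, mul_div_cancel₀ _ (Real.sqrt_pos.mpr (hw _)).ne']
    rw [sum_sub_distrib, hq.2, hst.1.2, sub_self]
  have hnorm : ‖WithLp.toLp 2 u‖ ≤ √(1 / minEntry w) := by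
    rw [EuclideanSpace.norm_eq]
    refine Real.sqrt_le_sqrt ((sum_congr rfl fun i _ => ?_).trans_le
      (sum_sq_sub_div_le hq hst.1 hw))
    rw [Real.norm_eq_abs, sq_abs, div_pow, Real.sq_sqrt (hw i).le]
  have hcontract := norm_pow_mulVec_le_of_dotProduct_eq_zero (hst.sqrt_vecMul_Lgen hw)
    (l2_opNorm_Lgen_sub_vecMulVec_le hP herg hst hrev hw) hu t
  rw [vecMul_pow_sub_eq_sqrt_mul hst hrev hw q t j, abs_mul, abs_of_nonneg (Real.sqrt_nonneg _)]
  calc √(w j) * |(Lgen w P ^ t *ᵥ u) j|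
      ≤ √(w j) * ((1 - absSpectralGap P) ^ t * √(1 / minEntry w)) := by
        refine mul_le_mul_of_nonneg_left ?_ (Real.sqrt_nonneg _)
        calc |(Lgen w P ^ t *ᵥ u) j| ≤ ‖WithLp.toLp 2 (Lgen w P ^ t *ᵥ u)‖ :=
              PiLp.norm_apply_le (WithLp.toLp 2 (Lgen w P ^ t *ᵥ u)) j
          _ ≤ _ := hcontract.trans (mul_le_mul_of_nonneg_left hnorm
              (pow_nonneg (sub_nonneg.mpr absSpectralGap_le_one) t))
    _ = (1 - absSpectralGap P) ^ t * √(w j / minEntry w) := by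
        rw [div_eq_mul_one_div (w j), Real.sqrt_mul (hw j).le]
        ring

theorem abs_cesaro_sub_div_le (hP : IsStochastic P) (herg : IsErgodic P)
    (hst : IsStationary P w) (hrev : IsReversible P w) (hw : ∀ i, 0 < w i) {q : Fin d → ℝ}
    (hq : IsProbVec q) {N : ℕ} (hN : 0 < N) (i : Fin d) :
    |((∑ t ∈ range N, (q ᵥ* P ^ t) i) / N - w i) / w i| ≤
      1 / (N * absSpectralGap P * minEntry w) := by
  have : Nonempty (Fin d) := ⟨i⟩
  have hγ := herg.absSpectralGap_pos hP
  have hm := minEntry_pos hw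
  have hN' : (0 : ℝ) < N := Nat.cast_pos.mpr hN
  have hsum : |∑ t ∈ range N, ((q ᵥ* P ^ t) i - w i)| ≤
      √(w i / minEntry w) / absSpectralGap P :=
    calc |∑ t ∈ range N, ((q ᵥ* P ^ t) i - w i)|
        ≤ ∑ t ∈ range N, (1 - absSpectralGap P) ^ t * √(w i / minEntry w) :=
          (abs_sum_le_sum_abs _ _).trans
            (sum_le_sum fun t _ => abs_vecMul_pow_sub_le hP herg hst hrev hw hq t i)
      _ ≤ 1 / (1 - (1 - absSpectralGap P)) * √(w i / minEntry w) := by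
          rw [← sum_mul, range_eq_Ico]
          refine mul_le_mul_of_nonneg_right ?_ (Real.sqrt_nonneg _)
          simpa using geom_sum_Ico_le_of_lt_one (sub_nonneg.mpr absSpectralGap_le_one)
            (sub_lt_self 1 hγ) (m := 0) (n := N)
      _ = √(w i / minEntry w) / absSpectralGap P := by ring
  have hratio : √(w i / minEntry w) ≤ w i / minEntry w :=
    (Real.sqrt_le_left (div_pos (hw i) hm).le).mpr
      (le_self_pow₀ ((one_le_div hm).mpr (minEntry_le (fun j => (hw j).le) i)) two_ne_zero)
  have hrewrite : ((∑ t ∈ range N, (q ᵥ* P ^ t) i) / N - w i) / w i =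
      (∑ t ∈ range N, ((q ᵥ* P ^ t) i - w i)) / (N * w i) := by
    rw [sum_sub_distrib, sum_const, card_range, nsmul_eq_mul]
    field_simp
  rw [hrewrite, abs_div, abs_of_pos (mul_pos hN' (hw i))]
  calc |∑ t ∈ range N, ((q ᵥ* P ^ t) i - w i)| / (N * w i)
      ≤ w i / minEntry w / absSpectralGap P / (N * w i) :=
        div_le_div_of_nonneg_right (hsum.trans (div_le_div_of_nonneg_right hratio hγ.le))
          (mul_pos hN' (hw i)).le
    _ = 1 / (N * absSpectralGap P * minEntry w) := by
        field_simp [(hw i).ne']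

theorem of_sub_mul_div_sqrt_eq_diagonal_mul_Lgen (hw : ∀ i, 0 < w i) (a : Fin d → ℝ) :
    (Matrix.of fun i j => (a i * P i j - w i * P i j) / (√(w i) * √(w j))) =
      diagonal (fun i => (a i - w i) / w i) * Lgen w P := by
  ext i j
  simp only [diagonal_mul, of_apply, Lgen]
  field_simp [(Real.sqrt_pos.mpr (hw i)).ne', (Real.sqrt_pos.mpr (hw j)).ne', (hw i).ne']
  rw [Real.sq_sqrt (hw i).le]
  ring

end Convergence

/-- bias of the empirical doublet matrix. -/
theorem statement10 (d n : ℕ) (hn : 2 ≤ n) (P : Matrix (Fin d) (Fin d) ℝ)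
    (w q : Fin d → ℝ)
    (hP : IsStochastic P) (herg : IsErgodic P) (hst : IsStationary P w)
    (hrev : IsReversible P w) (hpos : ∀ i, 0 < w i) (hq : IsProbVec q) :
    specNorm (Matrix.of fun i j =>
        ((∑ t ∈ Finset.range (n - 1), (q ᵥ* (P ^ t)) i) / ((n : ℝ) - 1) * P i j
            - w i * P i j) / (Real.sqrt (w i) * Real.sqrt (w j))) ≤
      1 / (((n : ℝ) - 1) * absSpectralGap P * minEntry w) := by
  have hn1 : ((n - 1 : ℕ) : ℝ) = (n : ℝ) - 1 := by rw [Nat.cast_sub (by omega), Nat.cast_one]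
  rw [← hn1, specNorm, l2_opNorm_toEuclideanCLM, of_sub_mul_div_sqrt_eq_diagonal_mul_Lgen hpos
    (fun i => (∑ t ∈ range (n - 1), (q ᵥ* P ^ t) i) / ((n - 1 : ℕ) : ℝ))]
  refine (l2_opNorm_mul _ _).trans ((mul_le_of_le_one_right (norm_nonneg _)
    (l2_opNorm_Lgen_le_one hP hrev hpos)).trans ?_)
  have hbound : 0 ≤ 1 / (((n - 1 : ℕ) : ℝ) * absSpectralGap P * minEntry w) :=
    div_nonneg zero_le_one (mul_nonneg (mul_nonneg (Nat.cast_nonneg _)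
      (herg.absSpectralGap_pos hP).le) (minEntry_nonneg fun i => (hpos i).le))
  rw [l2_opNorm_diagonal, pi_norm_le_iff_of_nonneg hbound]
  exact fun i => (Real.norm_eq_abs _).trans_le
    (abs_cesaro_sub_div_le hP herg hst hrev hpos hq (by omega) i)

end MCEst
end

section
/- Let (Y_t)_{t∈ℕ} be a martingale difference sequence with respect to a filtration F_0 ⊂ F_1 ⊂ F_2 ⊂ ..., with |Y_t| ≤ b almost surely for all t, and set S_k = Σ_{t=1}^k Y_t and V_k = Σ_{t=1}^k E[Y_t² | F_{t−1}]. Then for any n ≥ 1, x > 0, and c > 1: Pr[ ∃ k ∈ [n] such that S_k > sqrt(2 c V_k x) + 4bx/3 ] ≤ ( 1 + ⌈log_c(2n/x)⌉₊ ) · e^{−x}, where ⌈z⌉₊ = max{0, ⌈z⌉}. -/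
open Finset Matrix Real MeasureTheory
open scoped Classical BigOperators

namespace MCEst

/-!
For `l ≥ 0` put `φ(l) = (exp (l b) - 1 - l b) / b²`. Since `(eᵘ - 1 - u) / u²` is increasing,
`exp (l y) ≤ 1 + l y + φ(l) y²` for `|y| ≤ b`, hence
`E[exp (l Y_t) | F_{t-1}] ≤ exp (φ(l) E[Y_t² | F_{t-1}])` and `exp (l S_k - φ(l) V_k)` is a
nonnegative supermartingale. Ville's maximal inequality gives Freedman's bound
`P(∃ k ≤ n, S_k ≥ a, V_k ≤ v) ≤ exp (φ(l) v - l a)`, which for the best `l` is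
`exp (-a² / (2 (v + a b / 3)))`.

Since `V_n ≤ n b²`, the range of `V_k` is covered by the levels `v_j = b² x cʲ / 2`,
`j ≤ ⌈log_c (2n/x)⌉₊`. If `v_{j-1} < V_k ≤ v_j` then `√(2 c V_k x) ≥ √(2 v_j x)`, and the
Bernstein bound with `a = √(2 v_j x) + 4 b x / 3` is at most `e^{-x}`; the bottom level
`V_k ≤ v_0` is handled by `l = 6 / (5 b)`. A union bound over the levels finishes the proof.
-/

section Series

open scoped Nat

lemma two_mul_three_pow_le_factorial (n : ℕ) : 2 * 3 ^ n ≤ (n + 2)! := by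
  induction n with
  | zero => decide
  | succ k ih =>
    rw [show k + 1 + 2 = k + 2 + 1 by ring, Nat.factorial_succ, pow_succ]
    nlinarith

lemma hasSum_exp_sub_one_sub (x : ℝ) :
    HasSum (fun n : ℕ => x ^ (n + 2) / (n + 2)!) (exp x - 1 - x) := by
  have h := (hasSum_nat_add_iff' 2).mpr (NormedSpace.expSeries_div_hasSum_exp x)
  simpa [Finset.sum_range_succ, ← Real.exp_eq_exp_ℝ, sub_sub] using h

lemma exp_sub_one_sub_le_of_lt_three {u : ℝ} (hu0 : 0 ≤ u) (hu3 : u < 3) :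
    exp u - 1 - u ≤ u ^ 2 / (2 * (1 - u / 3)) := by
  have hgeo : HasSum (fun n : ℕ => u ^ 2 / 2 * (u / 3) ^ n) (u ^ 2 / 2 * (1 - u / 3)⁻¹) :=
    (hasSum_geometric_of_lt_one (by positivity) (by linarith)).mul_left _
  refine (hasSum_le (fun n => ?_) (hasSum_exp_sub_one_sub u) hgeo).trans_eq (by field_simp)
  have hfac : (2 * 3 ^ n : ℝ) ≤ (n + 2)! := by exact_mod_cast two_mul_three_pow_le_factorial n
  calc u ^ (n + 2) / (n + 2)! ≤ u ^ (n + 2) / (2 * 3 ^ n) := by gcongr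
    _ = u ^ 2 / 2 * (u / 3) ^ n := by rw [div_pow, pow_add]; ring

lemma exp_le_one_add_add_mul_sq_of_abs_le {v w : ℝ} (h : |v| ≤ w) :
    exp v ≤ 1 + v + (exp w - 1 - w) / w ^ 2 * v ^ 2 := by
  rcases ((abs_nonneg v).trans h).eq_or_lt with rfl | hw
  · simp [abs_nonpos_iff.mp h]
  have hterm (n : ℕ) : v ^ (n + 2) / (n + 2)! ≤ w ^ (n + 2) / (n + 2)! * (v ^ 2 / w ^ 2) := by
    have hvn : v ^ n ≤ w ^ n := (le_abs_self _).trans ((abs_pow v n).trans_le (by gcongr))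
    calc v ^ (n + 2) / (n + 2)! ≤ w ^ n * v ^ 2 / (n + 2)! := by
          rw [pow_add]; gcongr
      _ = w ^ (n + 2) / (n + 2)! * (v ^ 2 / w ^ 2) := by field_simp; ring
  have hsum := hasSum_le hterm (hasSum_exp_sub_one_sub v)
    ((hasSum_exp_sub_one_sub w).mul_right (v ^ 2 / w ^ 2))
  linarith [show (exp w - 1 - w) * (v ^ 2 / w ^ 2) = (exp w - 1 - w) / w ^ 2 * v ^ 2 by ring]

end Series

lemma exp_six_fifths_le : exp (6 / 5 : ℝ) ≤ 17 / 5 := by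
  refine le_of_pow_le_pow_left₀ (n := 5) (by norm_num) (by norm_num) ?_
  rw [← exp_nat_mul, show ((5 : ℕ) : ℝ) * (6 / 5) = ((6 : ℕ) : ℝ) * 1 by norm_num, exp_nat_mul]
  calc exp 1 ^ 6 ≤ 2.7182818286 ^ 6 := by gcongr; exact exp_one_lt_d9.le
    _ ≤ (17 / 5) ^ 5 := by norm_num

noncomputable def freedmanPhi (b l : ℝ) : ℝ := (exp (l * b) - 1 - l * b) / b ^ 2

lemma freedmanPhi_nonneg (b l : ℝ) : 0 ≤ freedmanPhi b l :=
  div_nonneg (by linarith [add_one_le_exp (l * b)]) (sq_nonneg b)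

lemma exp_mul_le_one_add_add_freedmanPhi_mul_sq {b l y : ℝ} (hl : 0 ≤ l) (hy : |y| ≤ b) :
    exp (l * y) ≤ 1 + l * y + freedmanPhi b l * y ^ 2 := by
  have h := exp_le_one_add_add_mul_sq_of_abs_le (v := l * y) (w := l * b)
    (by rw [abs_mul, abs_of_nonneg hl]; exact mul_le_mul_of_nonneg_left hy hl)
  rcases hl.eq_or_lt with rfl | hl0
  · simp [freedmanPhi]
  convert h using 2
  rw [freedmanPhi, mul_pow, mul_pow]
  field_simp

lemma le_bernstein_exponent {b v x : ℝ} (hb : 0 < b) (hv : 0 ≤ v) (hx : 0 < x) :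
    x ≤ (sqrt (2 * v * x) + 4 * b * x / 3) ^ 2 /
      (2 * (v + (sqrt (2 * v * x) + 4 * b * x / 3) * b / 3)) := by
  have hs := sq_sqrt (by positivity : 0 ≤ 2 * v * x)
  rw [le_div_iff₀ (by positivity)]
  nlinarith [mul_nonneg (mul_nonneg hb.le hx.le) (sqrt_nonneg (2 * v * x)), sq_nonneg (b * x)]

lemma le_pow_natCeil_logb {c y : ℝ} (hc : 1 < c) (hy : 0 ≤ y) : y ≤ c ^ ⌈logb c y⌉₊ := by
  rcases hy.eq_or_lt with rfl | hy
  · positivity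
  calc y = c ^ logb c y := (rpow_logb (by linarith) hc.ne' hy).symm
    _ ≤ c ^ (⌈logb c y⌉₊ : ℝ) := rpow_le_rpow_of_exponent_le hc.le (Nat.le_ceil _)
    _ = c ^ ⌈logb c y⌉₊ := rpow_natCast c _

lemma exists_peeling_level {c v₀ V : ℝ} (hc : 0 ≤ c) (J : ℕ) (hV : V ≤ v₀ * c ^ J) :
    ∃ j ≤ J, V ≤ v₀ * c ^ j ∧ (j ≠ 0 → v₀ * c ^ j ≤ c * V) := by
  induction J with
  | zero => exact ⟨0, le_rfl, hV, fun h => absurd rfl h⟩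
  | succ J ih =>
    by_cases h : V ≤ v₀ * c ^ J
    · obtain ⟨j, hj, hVj⟩ := ih h
      exact ⟨j, hj.trans J.le_succ, hVj⟩
    · refine ⟨J + 1, le_rfl, hV, fun _ => ?_⟩
      rw [pow_succ, mul_comm c V]
      nlinarith [not_le.1 h]

theorem _root_.MeasureTheory.Supermartingale.measure_exists_ge_le {Ω : Type*}
    {m0 : MeasurableSpace Ω} {μ : Measure Ω} [IsFiniteMeasure μ] {F : Filtration ℕ m0}
    {M : ℕ → Ω → ℝ} (hM : Supermartingale M F μ) (hM_nonneg : 0 ≤ M) {ε : ℝ} (hε : 0 < ε) (n : ℕ) :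
    μ {ω | ∃ k ≤ n, ε ≤ M k ω} ≤ ENNReal.ofReal ((∫ ω, M 0 ω ∂μ) / ε) := by
  set τ : Ω → WithTop ℕ := fun ω => (hittingBtwn M (Set.Ici ε) 0 n ω : ℕ)
  have hτ : IsStoppingTime F τ :=
    hM.stronglyAdapted.adapted.isStoppingTime_hittingBtwn measurableSet_Ici
  have hτn : ∀ ω, τ ω ≤ n := fun ω => WithTop.coe_le_coe.2 (hittingBtwn_le ω)
  have hsub : {ω | ∃ k ≤ n, ε ≤ M k ω} ⊆ {ω | ε ≤ stoppedValue M τ ω} :=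
    fun ω ⟨k, hk, hMk⟩ => stoppedValue_hittingBtwn_mem ⟨k, ⟨Nat.zero_le k, hk⟩, hMk⟩
  have hint : Integrable (stoppedValue M τ) μ := by
    simpa using (hM.neg.integrable_stoppedValue hτ hτn).neg
  have hstop : ∫ ω, stoppedValue M τ ω ∂μ ≤ ∫ ω, M 0 ω ∂μ := by
    have h := hM.neg.expected_stoppedValue_mono (isStoppingTime_const F 0) hτ
      (fun ω => WithTop.coe_le_coe.2 (Nat.zero_le _)) hτn
    simp only [stoppedValue, Pi.neg_apply, integral_neg, neg_le_neg_iff] at h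
    exact h
  have hmarkov : ε * μ.real {ω | ε ≤ stoppedValue M τ ω} ≤ ∫ ω, stoppedValue M τ ω ∂μ :=
    mul_meas_ge_le_integral_of_nonneg (ae_of_all μ fun ω => hM_nonneg _ ω) hint ε
  calc μ {ω | ∃ k ≤ n, ε ≤ M k ω} ≤ μ {ω | ε ≤ stoppedValue M τ ω} := measure_mono hsub
    _ = ENNReal.ofReal (μ.real {ω | ε ≤ stoppedValue M τ ω}) := (ofReal_measureReal).symm
    _ ≤ ENNReal.ofReal ((∫ ω, M 0 ω ∂μ) / ε) := by
      gcongr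
      rw [le_div_iff₀ hε]
      linarith

section Freedman

variable {Ω : Type*} {m0 : MeasurableSpace Ω} {μ : Measure Ω} {F : Filtration ℕ m0}
  {Y : ℕ → Ω → ℝ} {b l : ℝ}

lemma integrable_sq_of_ae_abs_le [IsFiniteMeasure μ] {Z : Ω → ℝ}
    (hZm : AEStronglyMeasurable Z μ) (hZb : ∀ᵐ ω ∂μ, |Z ω| ≤ b) : Integrable (Z ^ 2) μ := by
  refine .of_bound (hZm.pow 2) (b ^ 2) ?_
  filter_upwards [hZb] with ω h
  rw [Pi.pow_apply, Real.norm_of_nonneg (sq_nonneg _)]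
  exact sq_le_sq' (abs_le.1 h).1 (abs_le.1 h).2

lemma integrable_exp_mul_of_ae_abs_le [IsFiniteMeasure μ] {Z : Ω → ℝ}
    (hZm : AEStronglyMeasurable Z μ) (hZb : ∀ᵐ ω ∂μ, |Z ω| ≤ b) (hl : 0 ≤ l) :
    Integrable (fun ω => exp (l * Z ω)) μ := by
  refine .of_bound (continuous_exp.comp_aestronglyMeasurable (hZm.const_mul l)) (exp (l * b)) ?_
  filter_upwards [hZb] with ω h
  rw [Real.norm_of_nonneg (exp_pos _).le]
  exact exp_le_exp.2 (mul_le_mul_of_nonneg_left (abs_le.1 h).2 hl)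

lemma condExp_exp_mul_le [IsFiniteMeasure μ] {m : MeasurableSpace Ω} (hm : m ≤ m0) {Z : Ω → ℝ}
    (hZm : AEStronglyMeasurable[m0] Z μ) (hZ0 : μ[Z | m] =ᵐ[μ] 0) (hZb : ∀ᵐ ω ∂μ, |Z ω| ≤ b)
    (hl : 0 ≤ l) :
    μ[fun ω => exp (l * Z ω) | m] ≤ᵐ[μ] fun ω => exp (freedmanPhi b l * (μ[Z ^ 2 | m]) ω) := by
  set φ := freedmanPhi b l
  have hZi : Integrable Z μ := .of_bound hZm b (by simpa only [Real.norm_eq_abs] using hZb)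
  have hZ2i := integrable_sq_of_ae_abs_le hZm hZb
  have hPi : Integrable ((fun _ => (1 : ℝ)) + l • Z + φ • Z ^ 2) μ :=
    ((integrable_const 1).add (hZi.smul l)).add (hZ2i.smul φ)
  have hpoly : (fun ω => exp (l * Z ω)) ≤ᵐ[μ] (fun _ => (1 : ℝ)) + l • Z + φ • Z ^ 2 := by
    filter_upwards [hZb] with ω h
    exact exp_mul_le_one_add_add_freedmanPhi_mul_sq hl h
  have hlin : μ[(fun _ => (1 : ℝ)) + l • Z + φ • Z ^ 2 | m]
      =ᵐ[μ] (fun _ => (1 : ℝ)) + l • μ[Z | m] + φ • μ[Z ^ 2 | m] := by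
    filter_upwards [condExp_add ((integrable_const 1).add (hZi.smul l)) (hZ2i.smul φ) m,
      condExp_add (integrable_const 1) (hZi.smul l) m, condExp_smul l Z m,
      condExp_smul φ (Z ^ 2) m] with ω h1 h2 h3 h4
    simp [h1, h2, h3, h4, condExp_const hm]
  filter_upwards [condExp_mono (integrable_exp_mul_of_ae_abs_le hZm hZb hl) hPi hpoly, hlin, hZ0]
    with ω h1 h2 h3
  rw [h2] at h1
  simp only [Pi.add_apply, Pi.smul_apply, smul_eq_mul, h3, Pi.zero_apply, mul_zero] at h1
  linarith [add_one_le_exp (φ * (μ[Z ^ 2 | m]) ω)]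

noncomputable def partialSum (Y : ℕ → Ω → ℝ) (k : ℕ) (ω : Ω) : ℝ := ∑ t ∈ Icc 1 k, Y t ω

noncomputable def condVarSum (μ : Measure Ω) (F : Filtration ℕ m0) (Y : ℕ → Ω → ℝ) (k : ℕ)
    (ω : Ω) : ℝ :=
  ∑ t ∈ Icc 1 k, (μ[Y t ^ 2 | F (t - 1)]) ω

/-- Time starts at `t = 1`: `Y 0` is ignored. -/
structure IsBoundedMartingaleDiff (μ : Measure Ω) (F : Filtration ℕ m0) (Y : ℕ → Ω → ℝ)
    (b : ℝ) : Prop where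
  stronglyMeasurable : ∀ t, 1 ≤ t → StronglyMeasurable[F t] (Y t)
  condExp_eq_zero : ∀ t, 1 ≤ t → μ[Y t | F (t - 1)] =ᵐ[μ] 0
  ae_abs_le : ∀ t, 1 ≤ t → ∀ᵐ ω ∂μ, |Y t ω| ≤ b

lemma partialSum_succ (Y : ℕ → Ω → ℝ) (k : ℕ) (ω : Ω) :
    partialSum Y (k + 1) ω = partialSum Y k ω + Y (k + 1) ω :=
  sum_Icc_succ_top (by omega) _

lemma condVarSum_succ (k : ℕ) (ω : Ω) :
    condVarSum μ F Y (k + 1) ω = condVarSum μ F Y k ω + (μ[Y (k + 1) ^ 2 | F k]) ω :=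
  sum_Icc_succ_top (by omega) (fun t => (μ[Y t ^ 2 | F (t - 1)]) ω)

lemma stronglyMeasurable_condVarSum (k : ℕ) : StronglyMeasurable[F k] (condVarSum μ F Y k) :=
  Finset.stronglyMeasurable_fun_sum _ fun t ht =>
    stronglyMeasurable_condExp.mono (F.mono ((Nat.sub_le t 1).trans (mem_Icc.1 ht).2))

lemma condVarSum_nonneg (k : ℕ) : ∀ᵐ ω ∂μ, 0 ≤ condVarSum μ F Y k ω := by
  filter_upwards [(Filter.eventually_all_finset (Icc 1 k)).2 fun t _ =>
    condExp_nonneg (m := F (t - 1)) (f := Y t ^ 2) (ae_of_all μ fun ω => sq_nonneg (Y t ω))]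
    with ω h
  exact sum_nonneg h

namespace IsBoundedMartingaleDiff

lemma stronglyMeasurable_partialSum (hY : IsBoundedMartingaleDiff μ F Y b) (k : ℕ) :
    StronglyMeasurable[F k] (partialSum Y k) :=
  Finset.stronglyMeasurable_fun_sum _ fun t ht =>
    (hY.stronglyMeasurable t (mem_Icc.1 ht).1).mono (F.mono (mem_Icc.1 ht).2)

lemma aestronglyMeasurable (hY : IsBoundedMartingaleDiff μ F Y b) {t : ℕ} (ht : 1 ≤ t) :
    AEStronglyMeasurable (Y t) μ :=
  ((hY.stronglyMeasurable t ht).mono (F.le t)).aestronglyMeasurable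

lemma condExp_sq_le [IsFiniteMeasure μ] (hY : IsBoundedMartingaleDiff μ F Y b) {t : ℕ}
    (ht : 1 ≤ t) : μ[Y t ^ 2 | F (t - 1)] ≤ᵐ[μ] fun _ => b ^ 2 := by
  have hsq : Y t ^ 2 ≤ᵐ[μ] fun _ => b ^ 2 := by
    filter_upwards [hY.ae_abs_le t ht] with ω h
    exact sq_le_sq' (abs_le.1 h).1 (abs_le.1 h).2
  exact (condExp_mono (integrable_sq_of_ae_abs_le (hY.aestronglyMeasurable ht)
    (hY.ae_abs_le t ht)) (integrable_const (b ^ 2)) hsq).trans_eq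
    (condExp_const (F.le _) _).eventuallyEq

lemma partialSum_le (hY : IsBoundedMartingaleDiff μ F Y b) (k : ℕ) :
    ∀ᵐ ω ∂μ, partialSum Y k ω ≤ k * b := by
  filter_upwards [(Filter.eventually_all_finset (Icc 1 k)).2 fun t ht =>
    hY.ae_abs_le t (mem_Icc.1 ht).1] with ω h
  calc partialSum Y k ω ≤ ∑ _t ∈ Icc 1 k, b := sum_le_sum fun t ht => (abs_le.1 (h t ht)).2
    _ = k * b := by simp

lemma condVarSum_le [IsFiniteMeasure μ] (hY : IsBoundedMartingaleDiff μ F Y b) (k : ℕ) :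
    ∀ᵐ ω ∂μ, condVarSum μ F Y k ω ≤ k * b ^ 2 := by
  filter_upwards [(Filter.eventually_all_finset (Icc 1 k)).2 fun t ht =>
    hY.condExp_sq_le (mem_Icc.1 ht).1] with ω h
  calc condVarSum μ F Y k ω ≤ ∑ _t ∈ Icc 1 k, b ^ 2 := sum_le_sum h
    _ = k * b ^ 2 := by simp

end IsBoundedMartingaleDiff

noncomputable def freedmanProcess (μ : Measure Ω) (F : Filtration ℕ m0) (Y : ℕ → Ω → ℝ)
    (b l : ℝ) (k : ℕ) (ω : Ω) : ℝ :=
  exp (l * partialSum Y k ω - freedmanPhi b l * condVarSum μ F Y k ω)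

lemma stronglyMeasurable_freedmanProcess (hY : IsBoundedMartingaleDiff μ F Y b) (k : ℕ) :
    StronglyMeasurable[F k] (freedmanProcess μ F Y b l k) :=
  continuous_exp.comp_stronglyMeasurable
    (((hY.stronglyMeasurable_partialSum k).const_mul l).sub
      ((stronglyMeasurable_condVarSum k).const_mul _))

lemma integrable_freedmanProcess [IsFiniteMeasure μ] (hY : IsBoundedMartingaleDiff μ F Y b)
    (hl : 0 ≤ l) (k : ℕ) : Integrable (freedmanProcess μ F Y b l k) μ := by
  refine .of_bound ((stronglyMeasurable_freedmanProcess hY k).mono (F.le k)).aestronglyMeasurable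
    (exp (l * (k * b))) ?_
  filter_upwards [hY.partialSum_le k, condVarSum_nonneg (F := F) (Y := Y) k] with ω hS hV
  rw [freedmanProcess, Real.norm_of_nonneg (exp_pos _).le]
  exact exp_le_exp.2 (by nlinarith [freedmanPhi_nonneg b l, mul_le_mul_of_nonneg_left hS hl])

lemma condExp_freedmanProcess_succ_le [IsFiniteMeasure μ] (hY : IsBoundedMartingaleDiff μ F Y b)
    (hl : 0 ≤ l) (k : ℕ) :
    μ[freedmanProcess μ F Y b l (k + 1) | F k] ≤ᵐ[μ] freedmanProcess μ F Y b l k := by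
  set M := freedmanProcess μ F Y b l
  set W : Ω → ℝ := fun ω => M k ω * exp (-(freedmanPhi b l * (μ[Y (k + 1) ^ 2 | F k]) ω))
  have hfactor : M (k + 1) = W * fun ω => exp (l * Y (k + 1) ω) := by
    funext ω
    simp only [M, W, freedmanProcess, partialSum_succ, condVarSum_succ, Pi.mul_apply, ← exp_add]
    ring_nf
  have hWm : StronglyMeasurable[F k] W :=
    (stronglyMeasurable_freedmanProcess hY k).mul
      (continuous_exp.comp_stronglyMeasurable (stronglyMeasurable_condExp.const_mul _).neg)
  have hYm := hY.aestronglyMeasurable (t := k + 1) (by omega)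
  have hYb := hY.ae_abs_le (k + 1) (by omega)
  have hmgf := condExp_exp_mul_le (F.le k) hYm
    (by simpa using hY.condExp_eq_zero (k + 1) (by omega)) hYb hl
  filter_upwards [condExp_mul_of_stronglyMeasurable_left hWm
    (hfactor ▸ integrable_freedmanProcess hY hl (k + 1))
    (integrable_exp_mul_of_ae_abs_le hYm hYb hl), hmgf] with ω hpull hω
  rw [hfactor, hpull, Pi.mul_apply]
  calc W ω * (μ[fun ω => exp (l * Y (k + 1) ω) | F k]) ω
        ≤ W ω * exp (freedmanPhi b l * (μ[Y (k + 1) ^ 2 | F k]) ω) := by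
        gcongr
        exact mul_nonneg (exp_pos _).le (exp_pos _).le
    _ = M k ω := by rw [mul_assoc, ← exp_add, neg_add_cancel, exp_zero, mul_one]

theorem supermartingale_freedmanProcess [IsFiniteMeasure μ]
    (hY : IsBoundedMartingaleDiff μ F Y b) (hl : 0 ≤ l) :
    Supermartingale (freedmanProcess μ F Y b l) F μ :=
  supermartingale_nat (stronglyMeasurable_freedmanProcess hY) (integrable_freedmanProcess hY hl)
    (condExp_freedmanProcess_succ_le hY hl)

def freedmanEvent (μ : Measure Ω) (F : Filtration ℕ m0) (Y : ℕ → Ω → ℝ) (n : ℕ) (a v : ℝ) :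
    Set Ω :=
  {ω | ∃ k ∈ Icc 1 n, a ≤ partialSum Y k ω ∧ condVarSum μ F Y k ω ≤ v}

theorem measure_freedmanEvent_le_exp [IsProbabilityMeasure μ]
    (hY : IsBoundedMartingaleDiff μ F Y b) (hl : 0 ≤ l) (n : ℕ) (a v : ℝ) :
    μ (freedmanEvent μ F Y n a v) ≤ ENNReal.ofReal (exp (freedmanPhi b l * v - l * a)) := by
  set ε := exp (l * a - freedmanPhi b l * v)
  have hsub : freedmanEvent μ F Y n a v ⊆ {ω | ∃ k ≤ n, ε ≤ freedmanProcess μ F Y b l k ω} := by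
    rintro ω ⟨k, hk, hS, hV⟩
    refine ⟨k, (mem_Icc.1 hk).2, exp_le_exp.2 ?_⟩
    nlinarith [freedmanPhi_nonneg b l, mul_le_mul_of_nonneg_left hS hl]
  have hM0 : ∫ ω, freedmanProcess μ F Y b l 0 ω ∂μ = 1 := by
    simp [freedmanProcess, partialSum, condVarSum]
  refine (measure_mono hsub).trans (((supermartingale_freedmanProcess hY hl).measure_exists_ge_le
    (fun k ω => (exp_pos _).le) (exp_pos _) n).trans_eq ?_)
  rw [hM0, one_div, ← exp_neg, neg_sub]

theorem measure_freedmanEvent_le_bernstein [IsProbabilityMeasure μ]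
    (hY : IsBoundedMartingaleDiff μ F Y b) (hb : 0 < b) (n : ℕ) {a v : ℝ} (ha : 0 ≤ a)
    (hv : 0 < v) :
    μ (freedmanEvent μ F Y n a v) ≤ ENNReal.ofReal (exp (-(a ^ 2 / (2 * (v + a * b / 3))))) := by
  set D := v + a * b / 3 with hD_def
  have hD : 0 < D := by positivity
  -- the minimiser of `l ^ 2 * D / 2 - l * a`, the bound on `freedmanPhi b l * v - l * a` below
  set l := a / D with hl_def
  have hl : 0 ≤ l := by positivity
  have hlb : l * b < 3 := by
    rw [hl_def, div_mul_eq_mul_div, div_lt_iff₀ hD, hD_def]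
    linarith
  have hgap : 1 - l * b / 3 = v / D := by
    rw [hl_def]
    field_simp
    rw [hD_def]
    ring
  have hphi : freedmanPhi b l ≤ l ^ 2 / (2 * (1 - l * b / 3)) := by
    rw [freedmanPhi, div_le_iff₀ (by positivity)]
    calc exp (l * b) - 1 - l * b ≤ (l * b) ^ 2 / (2 * (1 - l * b / 3)) :=
          exp_sub_one_sub_le_of_lt_three (by positivity) hlb
      _ = l ^ 2 / (2 * (1 - l * b / 3)) * b ^ 2 := by ring
  refine (measure_freedmanEvent_le_exp hY hl n a v).trans
    (ENNReal.ofReal_le_ofReal (exp_le_exp.2 ?_))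
  calc freedmanPhi b l * v - l * a ≤ l ^ 2 / (2 * (1 - l * b / 3)) * v - l * a := by gcongr
    _ = -(a ^ 2 / (2 * D)) := by
      rw [hgap, hl_def]
      field_simp
      ring

theorem measure_freedmanEvent_sqrt_le [IsProbabilityMeasure μ]
    (hY : IsBoundedMartingaleDiff μ F Y b) (hb : 0 < b) (n : ℕ) {v x : ℝ} (hv : 0 < v)
    (hx : 0 < x) :
    μ (freedmanEvent μ F Y n (sqrt (2 * v * x) + 4 * b * x / 3) v) ≤
      ENNReal.ofReal (exp (-x)) :=
  (measure_freedmanEvent_le_bernstein hY hb n (by positivity) hv).trans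
    (ENNReal.ofReal_le_ofReal (exp_le_exp.2 (neg_le_neg (le_bernstein_exponent hb hv.le hx))))

theorem measure_freedmanEvent_base_le [IsProbabilityMeasure μ]
    (hY : IsBoundedMartingaleDiff μ F Y b) (hb : 0 < b) (n : ℕ) {x : ℝ} (hx : 0 ≤ x) :
    μ (freedmanEvent μ F Y n (4 * b * x / 3) (b ^ 2 * x / 2)) ≤ ENNReal.ofReal (exp (-x)) := by
  refine (measure_freedmanEvent_le_exp hY (l := 6 / (5 * b)) (by positivity) n _ _).trans
    (ENNReal.ofReal_le_ofReal (exp_le_exp.2 ?_))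
  rw [freedmanPhi, show 6 / (5 * b) * b = 6 / 5 by field_simp]
  have h : (exp (6 / 5) - 1 - 6 / 5) / b ^ 2 * (b ^ 2 * x / 2) - 6 / (5 * b) * (4 * b * x / 3)
      = (exp (6 / 5) - 17 / 5) * x / 2 - x := by
    field_simp
    ring
  rw [h]
  nlinarith [exp_six_fifths_le]

/-- The `j`-th level of the peeling argument; the bottom level has no lower bound on the
variance, hence no square-root term in its threshold. -/
noncomputable def peelingEvent (μ : Measure Ω) (F : Filtration ℕ m0) (Y : ℕ → Ω → ℝ)
    (n : ℕ) (b x c : ℝ) (j : ℕ) : Set Ω :=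
  freedmanEvent μ F Y n
    ((if j = 0 then 0 else sqrt (2 * (b ^ 2 * x / 2 * c ^ j) * x)) + 4 * b * x / 3)
    (b ^ 2 * x / 2 * c ^ j)

theorem measure_peelingEvent_le [IsProbabilityMeasure μ] (hY : IsBoundedMartingaleDiff μ F Y b)
    (hb : 0 < b) {x c : ℝ} (hx : 0 < x) (hc : 0 < c) (n j : ℕ) :
    μ (peelingEvent μ F Y n b x c j) ≤ ENNReal.ofReal (exp (-x)) := by
  unfold peelingEvent
  split_ifs with hj
  · simpa [hj] using measure_freedmanEvent_base_le hY hb n hx.le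
  · exact measure_freedmanEvent_sqrt_le hY hb n (by positivity) hx

lemma ae_le_iUnion_peelingEvent [IsFiniteMeasure μ] (hY : IsBoundedMartingaleDiff μ F Y b)
    {x c : ℝ} (hx : 0 < x) (hc : 1 < c) (n : ℕ) :
    {ω | ∃ k ∈ Icc 1 n,
        sqrt (2 * c * condVarSum μ F Y k ω * x) + 4 * b * x / 3 < partialSum Y k ω} ≤ᵐ[μ]
      (⋃ j ∈ range (⌈logb c (2 * n / x)⌉₊ + 1), peelingEvent μ F Y n b x c j : Set Ω) := by
  set J := ⌈logb c (2 * n / x)⌉₊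
  have hnJ : n * b ^ 2 ≤ b ^ 2 * x / 2 * c ^ J :=
    calc (n : ℝ) * b ^ 2 = b ^ 2 * x / 2 * (2 * n / x) := by field_simp
      _ ≤ b ^ 2 * x / 2 * c ^ J := by gcongr; exact le_pow_natCeil_logb hc (by positivity)
  filter_upwards [(Filter.eventually_all_finset (Icc 1 n)).2 fun k _ => hY.condVarSum_le k]
    with ω hV ⟨k, hk, hlt⟩
  have hVJ : condVarSum μ F Y k ω ≤ b ^ 2 * x / 2 * c ^ J :=
    (hV k hk).trans (le_trans (by gcongr; exact_mod_cast (mem_Icc.1 hk).2) hnJ)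
  obtain ⟨j, hjJ, hVj, hj⟩ := exists_peeling_level (by linarith) J hVJ
  refine Set.mem_biUnion (mem_range.2 (Nat.lt_succ_of_le hjJ)) ⟨k, hk, ?_, hVj⟩
  split_ifs with hj0
  · linarith [sqrt_nonneg (2 * c * condVarSum μ F Y k ω * x)]
  · linarith [sqrt_le_sqrt (by nlinarith [hj hj0] :
      2 * (b ^ 2 * x / 2 * c ^ j) * x ≤ 2 * c * condVarSum μ F Y k ω * x)]

end Freedman

theorem statement11_general {Ω : Type*} {m0 : MeasurableSpace Ω} {μ : MeasureTheory.Measure Ω}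
    [MeasureTheory.IsProbabilityMeasure μ] (F : MeasureTheory.Filtration ℕ m0)
    (Y : ℕ → Ω → ℝ) (b : ℝ) (hb : 0 < b)
    (hadapted : ∀ t, 1 ≤ t → StronglyMeasurable[F t] (Y t))
    (hmdiff : ∀ t, 1 ≤ t → μ[Y t | F (t - 1)] =ᵐ[μ] 0)
    (hbdd : ∀ t, 1 ≤ t → ∀ᵐ ω ∂μ, |Y t ω| ≤ b)
    (n : ℕ) (x c : ℝ) (hx : 0 < x) (hc : 1 < c) :
    μ {ω | ∃ k ∈ Finset.Icc 1 n,
        Real.sqrt (2 * c * (∑ t ∈ Finset.Icc 1 k, (μ[(Y t) ^ 2 | F (t - 1)]) ω) * x) +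
            4 * b * x / 3 < ∑ t ∈ Finset.Icc 1 k, Y t ω} ≤
      ENNReal.ofReal ((1 + (⌈Real.logb c (2 * n / x)⌉₊ : ℝ)) * Real.exp (-x)) := by
  have hY : IsBoundedMartingaleDiff μ F Y b := ⟨hadapted, hmdiff, hbdd⟩
  set J := ⌈logb c (2 * n / x)⌉₊
  calc _ ≤ μ (⋃ j ∈ range (J + 1), peelingEvent μ F Y n b x c j) :=
        measure_mono_ae (ae_le_iUnion_peelingEvent hY hx hc n)
    _ ≤ ∑ j ∈ range (J + 1), μ (peelingEvent μ F Y n b x c j) := measure_biUnion_finset_le _ _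
    _ ≤ ∑ _j ∈ range (J + 1), ENNReal.ofReal (exp (-x)) :=
        sum_le_sum fun j _ => measure_peelingEvent_le hY hb hx (by linarith) n j
    _ = ENNReal.ofReal ((1 + J) * exp (-x)) := by
        rw [sum_const, card_range, nsmul_eq_mul, ENNReal.ofReal_mul (by positivity),
          ← ENNReal.ofReal_natCast, Nat.cast_succ, add_comm]

/-- a corollary of Freedman's inequality for martingale
difference sequences. -/
theorem statement11 {Ω : Type*} {m0 : MeasurableSpace Ω} {μ : MeasureTheory.Measure Ω}
    [MeasureTheory.IsProbabilityMeasure μ] (F : MeasureTheory.Filtration ℕ m0)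
    (Y : ℕ → Ω → ℝ) (b : ℝ) (hb : 0 < b)
    (hadapted : ∀ t, 1 ≤ t → StronglyMeasurable[F t] (Y t))
    (hmdiff : ∀ t, 1 ≤ t → μ[Y t | F (t - 1)] =ᵐ[μ] 0)
    (hbdd : ∀ t, 1 ≤ t → ∀ᵐ ω ∂μ, |Y t ω| ≤ b)
    (n : ℕ) (hn : 1 ≤ n) (x c : ℝ) (hx : 0 < x) (hc : 1 < c) :
    μ {ω | ∃ k ∈ Finset.Icc 1 n,
        Real.sqrt (2 * c * (∑ t ∈ Finset.Icc 1 k, (μ[(Y t) ^ 2 | F (t - 1)]) ω) * x) +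
            4 * b * x / 3 < ∑ t ∈ Finset.Icc 1 k, Y t ω} ≤
      ENNReal.ofReal ((1 + (⌈Real.logb c (2 * n / x)⌉₊ : ℝ)) * Real.exp (-x)) :=
  statement11_general F Y b hb hadapted hmdiff hbdd n x c hx hc

end MCEst
end

section
/- Fix c > 1, α > 0, δ ∈ (0,1), and let t̂ = inf{ t ≥ 0 : 2d²·(1 + ⌈log_c(2n/t)⌉₊)·e^{−t} ≤ δ }. Suppose that for a pair (i,j) ∈ [d]² with N_i > 0 it holds that |P̂_{i,j} − P_{i,j}| ≤ sqrt( (N_i/(N_i+dα))·2c P_{i,j}(1−P_{i,j}) t̂ /(N_i+dα) ) + (4/3) t̂/(N_i+dα) + |α − dα P_{i,j}|/(N_i+dα). Then |P̂_{i,j} − P_{i,j}| ≤ B̂_{i,j}, where B̂_{i,j} = ( sqrt( c t̂ / (2 N_i) ) + sqrt( c t̂ / (2 N_i) + sqrt( 2c P̂_{i,j}(1−P̂_{i,j}) t̂ / N_i ) + ( (4/3) t̂ + |α − dα P̂_{i,j}| ) / N_i ) )². -/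
/-!
The hypothesis bounds `Δ = |P̂ᵢⱼ - Pᵢⱼ|` in terms of the unknown `Pᵢⱼ`. Three elementary steps make
it observable. First, `|α - dα Pᵢⱼ| ≤ |α - dα P̂ᵢⱼ| + dα Δ`, and the `dα Δ` is absorbed by the
smoothed denominator `Nᵢ + dα`, leaving `Δ ≤ √(2c Pᵢⱼ(1 - Pᵢⱼ) t̂ / Nᵢ) + (4t̂/3 + |α - dα P̂ᵢⱼ|) / Nᵢ`.
Second, `p(1 - p) ≤ q(1 - q) + |q - p|` on `[0, 1]` turns the variance term into
`√(2c P̂ᵢⱼ(1 - P̂ᵢⱼ) t̂ / Nᵢ) + 2a √Δ` with `a = √(c t̂ / (2Nᵢ))`. Finally `Δ ≤ 2a √Δ + B` is a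
quadratic inequality in `√Δ`, so `√Δ` is at most its larger root `a + √(a² + B)`.
-/

open Finset Matrix Real MeasureTheory
open scoped Classical BigOperators

namespace MCEst

lemma sqrt_add_le_sqrt_add_sqrt {x y : ℝ} (hx : 0 ≤ x) (hy : 0 ≤ y) : √(x + y) ≤ √x + √y := by
  rw [Real.sqrt_le_left (by positivity)]
  nlinarith [Real.sq_sqrt hx, Real.sq_sqrt hy, Real.sqrt_nonneg x, Real.sqrt_nonneg y]

lemma le_sq_add_sqrt_of_le_two_mul_sqrt_add {Δ a B : ℝ} (h : Δ ≤ 2 * a * √Δ + B) :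
    Δ ≤ (a + √(a ^ 2 + B)) ^ 2 := by
  rcases lt_or_ge Δ 0 with hΔ | hΔ
  · exact hΔ.le.trans (sq_nonneg _)
  have hu := Real.sq_sqrt hΔ
  have hroot : √Δ - a ≤ √(a ^ 2 + B) :=
    (le_abs_self _).trans (Real.abs_le_sqrt (by nlinarith))
  calc Δ = √Δ ^ 2 := hu.symm
    _ ≤ (a + √(a ^ 2 + B)) ^ 2 := pow_le_pow_left₀ (Real.sqrt_nonneg Δ) (by linarith) 2

lemma mul_one_sub_le_mul_one_sub_add_abs {p q : ℝ} (hp₀ : 0 ≤ p) (hp₁ : p ≤ 1) (hq₀ : 0 ≤ q)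
    (hq₁ : q ≤ 1) : p * (1 - p) ≤ q * (1 - q) + |q - p| := by
  have hdiff : p * (1 - p) - q * (1 - q) = (q - p) * (p + q - 1) := by ring
  have hfactor : |p + q - 1| ≤ 1 := abs_le.mpr ⟨by linarith, by linarith⟩
  have := calc (q - p) * (p + q - 1) ≤ |(q - p) * (p + q - 1)| := le_abs_self _
    _ = |q - p| * |p + q - 1| := abs_mul _ _
    _ ≤ |q - p| := mul_le_of_le_one_right (abs_nonneg _) hfactor
  linarith

lemma sqrt_mul_mul_one_sub_le {k p q : ℝ} (hk : 0 ≤ k) (hp₀ : 0 ≤ p) (hp₁ : p ≤ 1) (hq₀ : 0 ≤ q)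
    (hq₁ : q ≤ 1) : √(k * (p * (1 - p))) ≤ √(k * (q * (1 - q))) + √k * √|q - p| := by
  calc √(k * (p * (1 - p))) ≤ √(k * (q * (1 - q)) + k * |q - p|) := by
        rw [← mul_add]
        gcongr
        exact mul_one_sub_le_mul_one_sub_add_abs hp₀ hp₁ hq₀ hq₁
    _ ≤ √(k * (q * (1 - q))) + √(k * |q - p|) :=
        sqrt_add_le_sqrt_add_sqrt (mul_nonneg hk (by nlinarith)) (by positivity)
    _ = √(k * (q * (1 - q))) + √k * √|q - p| := by rw [Real.sqrt_mul hk |q - p|]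

lemma abs_sub_le_of_smoothed_bound {N s α p q A T : ℝ} (hN : 0 < N) (hs : 0 ≤ s)
    (h : |q - p| ≤ √(N / (N + s) * A / (N + s)) + T / (N + s) + |α - s * p| / (N + s)) :
    |q - p| ≤ √(A / N) + (T + |α - s * q|) / N := by
  have hD : 0 < N + s := by linarith
  have hsqrt : √(N / (N + s) * A / (N + s)) = N / (N + s) * √(A / N) := by
    rw [show N / (N + s) * A / (N + s) = (N / (N + s)) ^ 2 * (A / N) by field_simp,
      Real.sqrt_mul (sq_nonneg _), Real.sqrt_sq (by positivity)]
  have hbias : |α - s * p| ≤ |α - s * q| + s * |q - p| := by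
    calc |α - s * p| = |(α - s * q) + s * (q - p)| := by ring_nf
      _ ≤ |α - s * q| + |s * (q - p)| := abs_add_le _ _
      _ = |α - s * q| + s * |q - p| := by rw [abs_mul, abs_of_nonneg hs]
  rw [hsqrt, mul_comm, ← mul_div_assoc, ← add_div, ← add_div, le_div_iff₀ hD] at h
  rw [← sub_le_iff_le_add', le_div_iff₀ hN]
  linarith

lemma IsStochastic.le_one {d : ℕ} {P : Matrix (Fin d) (Fin d) ℝ} (hP : IsStochastic P)
    (i j : Fin d) : P i j ≤ 1 :=
  (hP.2 i).symm ▸ Finset.single_le_sum (fun k _ => hP.1 i k) (Finset.mem_univ j)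

lemma Npair_le_Ncount {d n : ℕ} (x : Fin n → Fin d) (i j : Fin d) :
    Npair x i j ≤ Ncount x i :=
  Finset.card_le_card fun _ ht => by
    simp only [Finset.mem_filter] at ht ⊢
    exact ⟨ht.1, ht.2.1, ht.2.2.1⟩

lemma Phat_nonneg {d n : ℕ} {α : ℝ} (hα : 0 ≤ α) (x : Fin n → Fin d) (i j : Fin d) :
    0 ≤ Phat α x i j := by
  simp only [Phat, Matrix.of_apply]
  positivity

lemma Phat_le_one {d n : ℕ} {α : ℝ} (hα : 0 ≤ α) (x : Fin n → Fin d) (i j : Fin d) :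
    Phat α x i j ≤ 1 := by
  have hd : (1 : ℝ) ≤ d := by exact_mod_cast i.pos
  have hpair : (Npair x i j : ℝ) ≤ Ncount x i := by exact_mod_cast Npair_le_Ncount x i j
  simp only [Phat, Matrix.of_apply]
  exact div_le_one_of_le₀ (by nlinarith) (by positivity)

lemma that_nonneg (d n : ℕ) (c δ : ℝ) : 0 ≤ that d n c δ :=
  Real.sInf_nonneg fun _ ht => ht.1

theorem statement13_general (d n : ℕ) (P : Matrix (Fin d) (Fin d) ℝ) (hP : IsStochastic P)
    (c α δ : ℝ) (hc : 1 < c) (hα : 0 < α)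
    (x : Fin n → Fin d) (i j : Fin d) (hNi : 0 < Ncount x i)
    (hyp : |Phat α x i j - P i j| ≤
      Real.sqrt (((Ncount x i : ℝ) / ((Ncount x i : ℝ) + d * α)) *
          (2 * c * P i j * (1 - P i j) * that d n c δ) / ((Ncount x i : ℝ) + d * α)) +
        (4 / 3) * that d n c δ / ((Ncount x i : ℝ) + d * α) +
        |α - d * α * P i j| / ((Ncount x i : ℝ) + d * α)) :
    |Phat α x i j - P i j| ≤ Bhat α c δ x i j := by
  set N : ℝ := (Ncount x i : ℝ)
  set t := that d n c δ
  set p := P i j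
  set q := Phat α x i j
  have hN : 0 < N := Nat.cast_pos.mpr hNi
  have hc₀ : 0 ≤ c := by linarith
  have ht := that_nonneg d n c δ
  have hk : 0 ≤ 2 * c * t / N := by positivity
  have hdebias := abs_sub_le_of_smoothed_bound hN (by positivity) hyp
  have hvar := sqrt_mul_mul_one_sub_le (p := p) (q := q) hk (hP.1 i j) (hP.le_one i j)
    (Phat_nonneg hα.le x i j) (Phat_le_one hα.le x i j)
  have hk_eq : √(2 * c * t / N) = 2 * √(c * t / (2 * N)) := by
    rw [show 2 * c * t / N = 2 ^ 2 * (c * t / (2 * N)) by field_simp,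
      Real.sqrt_mul (by norm_num), Real.sqrt_sq (by norm_num)]
  have hkey := le_sq_add_sqrt_of_le_two_mul_sqrt_add (Δ := |q - p|) (a := √(c * t / (2 * N)))
    (B := √(2 * c * q * (1 - q) * t / N) + (4 / 3 * t + |α - d * α * q|) / N) <| by
    rw [show 2 * c * p * (1 - p) * t / N = 2 * c * t / N * (p * (1 - p)) by ring] at hdebias
    rw [← hk_eq, show 2 * c * q * (1 - q) * t / N = 2 * c * t / N * (q * (1 - q)) by ring]
    linarith
  rw [Real.sq_sqrt (by positivity), ← add_assoc] at hkey
  exact hkey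

/-- deterministic conversion of the unobservable bound into the
fully observable bound B̂. -/
theorem statement13 (d n : ℕ) (P : Matrix (Fin d) (Fin d) ℝ) (hP : IsStochastic P)
    (c α δ : ℝ) (hc : 1 < c) (hα : 0 < α) (hδ : 0 < δ) (hδ1 : δ < 1)
    (x : Fin n → Fin d) (i j : Fin d) (hNi : 0 < Ncount x i)
    (hyp : |Phat α x i j - P i j| ≤
      Real.sqrt (((Ncount x i : ℝ) / ((Ncount x i : ℝ) + d * α)) *
          (2 * c * P i j * (1 - P i j) * that d n c δ) / ((Ncount x i : ℝ) + d * α)) +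
        (4 / 3) * that d n c δ / ((Ncount x i : ℝ) + d * α) +
        |α - d * α * P i j| / ((Ncount x i : ℝ) + d * α)) :
    |Phat α x i j - P i j| ≤ Bhat α c δ x i j :=
  statement13_general d n P hP c α δ hc hα x i j hNi hyp

end MCEst
end
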